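/- arXiv:1710.09922 — 4 statements merged into one kernel-verified Lean document; each statement's English description precedes it below -/
import Mathlib

section
/- Let A, B, L, M be complex numbers with A ≠ 0 and B ≠ 0. The quartic polynomial p(z) = B²z⁴ + BMz³ − ALz − A² in z has a repeated complex root if and only if the quantity Δ = −256A³B³ + 192A²B²LM − 3AB(9L⁴ − 2L²M² + 9M⁴) + 4L³M³ equals 0. -/
open Polynomial

private lemma two_le_count_iff {s : Multiset ℂ} :
    (∃ z : ℂ, 2 ≤ s.count z) ↔ ¬ s.Nodup := by
  rw [Multiset.nodup_iff_count_le_one]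
  push_neg
  exact exists_congr fun z => by omega

private lemma card4 {s : Multiset ℂ} (h : Multiset.card s = 4) :
    ∃ a b c d : ℂ, s = {a, b, c, d} := by
  obtain ⟨a, ha⟩ : ∃ a, a ∈ s := Multiset.card_pos_iff_exists_mem.mp (by omega)
  obtain ⟨t, rfl⟩ := Multiset.exists_cons_of_mem ha
  have ht : Multiset.card t = 3 := by simpa using h
  obtain ⟨b, c, d, rfl⟩ := Multiset.card_eq_three.mp ht
  exact ⟨a, b, c, d, rfl⟩

private lemma disc_id (r1 r2 r3 r4 c1 c2 c3 c4 : ℂ)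
    (h1 : r1 + r2 + r3 + r4 = c1)
    (h2 : r1*r2 + r1*r3 + r1*r4 + r2*r3 + r2*r4 + r3*r4 = c2)
    (h3 : r1*r2*r3 + r1*r2*r4 + r1*r3*r4 + r2*r3*r4 = c3)
    (h4 : r1*r2*r3*r4 = c4) :
    (r1-r2)^2*(r1-r3)^2*(r1-r4)^2*(r2-r3)^2*(r2-r4)^2*(r3-r4)^2 =
      256*c4^3 - 192*(-c1)*(-c3)*c4^2 - 128*c2^2*c4^2 + 144*c2*(-c3)^2*c4 - 27*(-c3)^4
      + 144*(-c1)^2*c2*c4^2 - 6*(-c1)^2*(-c3)^2*c4 - 80*(-c1)*c2^2*(-c3)*c4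
      + 18*(-c1)*c2*(-c3)^3 + 16*c2^4*c4 - 4*c2^3*(-c3)^2 - 27*(-c1)^4*c4^2
      + 18*(-c1)^3*c2*(-c3)*c4 - 4*(-c1)^3*(-c3)^3 - 4*(-c1)^2*c2^3*c4
      + (-c1)^2*c2^2*(-c3)^2 := by
  rw [← h1, ← h2, ← h3, ← h4]; ring

set_option maxHeartbeats 1000000 in
/-- For `A B L M : ℂ` with `A ≠ 0`, `B ≠ 0`, the quartic
`B²z⁴ + BMz³ − ALz − A²` has a repeated complex root iff
`Δ = −256A³B³ + 192A²B²LM − 3AB(9L⁴ − 2L²M² + 9M⁴) + 4L³M³ = 0`. -/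
theorem stmt0 (A B L M : ℂ) (hA : A ≠ 0) (hB : B ≠ 0) :
    (∃ z : ℂ, 2 ≤ Polynomial.rootMultiplicity z
        (C (B ^ 2) * X ^ 4 + C (B * M) * X ^ 3 - C (A * L) * X - C (A ^ 2) : ℂ[X])) ↔
      -256 * A ^ 3 * B ^ 3 + 192 * A ^ 2 * B ^ 2 * L * M
        - 3 * A * B * (9 * L ^ 4 - 2 * L ^ 2 * M ^ 2 + 9 * M ^ 4) + 4 * L ^ 3 * M ^ 3 = 0 := by
  have hB2 : (B : ℂ) ^ 2 ≠ 0 := pow_ne_zero _ hB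
  set p : ℂ[X] := C (B ^ 2) * X ^ 4 + C (B * M) * X ^ 3 - C (A * L) * X - C (A ^ 2) with hpdef
  have hdeg : p.natDegree = 4 := by
    unfold p
    compute_degree!
  have hp0 : p ≠ 0 := fun h => by simp [h] at hdeg
  have hsp : Splits p := IsAlgClosed.splits p
  have hcard : Multiset.card p.roots = 4 := (splits_iff_card_roots.mp hsp).trans hdeg
  obtain ⟨r1, r2, r3, r4, hr⟩ := card4 hcard
  have hlead : p.leadingCoeff = B ^ 2 := by
    rw [Polynomial.leadingCoeff, hdeg]
    unfold p
    simp only [coeff_add, coeff_sub, coeff_C_mul, coeff_X_pow, coeff_C, coeff_X]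
    norm_num
  have hfact : p = C (B ^ 2) * ((X - C r1) * ((X - C r2) * ((X - C r3) * (X - C r4)))) := by
    have h := hsp.eq_prod_roots
    rw [hlead, hr] at h
    simpa using h
  have hexp : p = C (B^2) * X^4 - C (B^2*(r1+r2+r3+r4)) * X^3
      + C (B^2*(r1*r2+r1*r3+r1*r4+r2*r3+r2*r4+r3*r4)) * X^2
      - C (B^2*(r1*r2*r3+r1*r2*r4+r1*r3*r4+r2*r3*r4)) * X
      + C (B^2*(r1*r2*r3*r4)) := by
    rw [hfact]
    simp only [C_mul, C_add]
    ring
  rw [hpdef] at hexp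
  have c3 := congrArg (fun q : ℂ[X] => q.coeff 3) hexp
  have c2 := congrArg (fun q : ℂ[X] => q.coeff 2) hexp
  have c1 := congrArg (fun q : ℂ[X] => q.coeff 1) hexp
  have c0 := congrArg (fun q : ℂ[X] => q.coeff 0) hexp
  simp only [coeff_add, coeff_sub, coeff_C_mul, coeff_X_pow, coeff_C, coeff_X] at c3 c2 c1 c0
  norm_num at c3 c2 c1 c0
  have c3' : M = -(B * (r1 + r2 + r3 + r4)) :=
    mul_left_cancel₀ hB (by linear_combination c3)
  have hv2 : r1*r2 + r1*r3 + r1*r4 + r2*r3 + r2*r4 + r3*r4 = 0 := c2.resolve_left hB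
  have h1 : B*r1 + B*r2 + B*r3 + B*r4 = -M := by linear_combination c3'
  have h2 : (B*r1)*(B*r2) + (B*r1)*(B*r3) + (B*r1)*(B*r4) + (B*r2)*(B*r3)
      + (B*r2)*(B*r4) + (B*r3)*(B*r4) = 0 := by linear_combination B^2 * hv2
  have h3 : (B*r1)*(B*r2)*(B*r3) + (B*r1)*(B*r2)*(B*r4) + (B*r1)*(B*r3)*(B*r4)
      + (B*r2)*(B*r3)*(B*r4) = A * L * B := by linear_combination (-B) * c1
  have h4 : (B*r1)*(B*r2)*(B*r3)*(B*r4) = -(A^2) * B^2 := by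
    linear_combination (-(B^2)) * c0
  have key := disc_id (B*r1) (B*r2) (B*r3) (B*r4) _ _ _ _ h1 h2 h3 h4
  have main : (A^3 * B^3) * (-256 * A ^ 3 * B ^ 3 + 192 * A ^ 2 * B ^ 2 * L * M
        - 3 * A * B * (9 * L ^ 4 - 2 * L ^ 2 * M ^ 2 + 9 * M ^ 4) + 4 * L ^ 3 * M ^ 3)
      = B^12 * ((r1-r2)^2*(r1-r3)^2*(r1-r4)^2*(r2-r3)^2*(r2-r4)^2*(r3-r4)^2) := by
    linear_combination -key
  have hiff1 : (∃ z : ℂ, 2 ≤ Polynomial.rootMultiplicity z p) ↔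
      ¬ ({r1, r2, r3, r4} : Multiset ℂ).Nodup := by
    rw [← hr, ← two_le_count_iff]
    exact exists_congr fun z => by rw [Polynomial.count_roots]
  have hiff2 : ¬ ({r1, r2, r3, r4} : Multiset ℂ).Nodup ↔
      (r1 = r2 ∨ r1 = r3 ∨ r1 = r4 ∨ r2 = r3 ∨ r2 = r4 ∨ r3 = r4) := by
    simp only [Multiset.insert_eq_cons, Multiset.nodup_cons, Multiset.mem_cons,
      Multiset.mem_singleton, Multiset.nodup_singleton, and_true, not_and, not_not]
    push_neg
    tauto
  have hiff3 : (r1 = r2 ∨ r1 = r3 ∨ r1 = r4 ∨ r2 = r3 ∨ r2 = r4 ∨ r3 = r4) ↔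
      (r1-r2)^2*(r1-r3)^2*(r1-r4)^2*(r2-r3)^2*(r2-r4)^2*(r3-r4)^2 = 0 := by
    simp [mul_eq_zero, sub_eq_zero, pow_eq_zero_iff]
    simp only [or_assoc]
  rw [hiff1, hiff2, hiff3]
  constructor
  · intro h0
    have := main
    rw [h0, mul_zero] at this
    have hAB : (A ^ 3 * B ^ 3 : ℂ) ≠ 0 := mul_ne_zero (pow_ne_zero _ hA) (pow_ne_zero _ hB)
    exact (mul_eq_zero.mp this).resolve_left hAB
  · intro h0
    have := main
    rw [h0, mul_zero] at this
    have hB12 : (B ^ 12 : ℂ) ≠ 0 := pow_ne_zero _ hB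
    exact (mul_eq_zero.mp this.symm).resolve_left hB12
end

section
/- Let A, B, L, M be complex numbers with A ≠ 0 and M ≠ 0. The quartic 3A²z⁴ + 4ABz³ + (2AL + B²)z² − M² has exactly two distinct roots each of multiplicity two if and only if B = 0 and L² = −3M². -/
open Polynomial

/-- For `A B L M : ℂ` with `A ≠ 0`, `M ≠ 0`, the quartic
`3A²z⁴ + 4ABz³ + (2AL + B²)z² − M²` has exactly two distinct roots, each of
multiplicity two, iff `B = 0` and `L² = −3M²`. -/
theorem stmt7 (A B L M : ℂ) (hA : A ≠ 0) (hM : M ≠ 0) :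
    (∃ z₁ z₂ : ℂ, z₁ ≠ z₂ ∧
        (C (3 * A ^ 2) * X ^ 4 + C (4 * A * B) * X ^ 3
          + C (2 * A * L + B ^ 2) * X ^ 2 - C (M ^ 2) : ℂ[X])
          = C (3 * A ^ 2) * (X - C z₁) ^ 2 * (X - C z₂) ^ 2) ↔
      (B = 0 ∧ L ^ 2 = -3 * M ^ 2) := by
  constructor
  · rintro ⟨z₁, z₂, hz, h⟩
    have expand : C (3 * A ^ 2) * (X - C z₁) ^ 2 * (X - C z₂) ^ 2
        = C (3 * A ^ 2) * X ^ 4 + C (3 * A ^ 2 * (-2 * (z₁ + z₂))) * X ^ 3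
          + C (3 * A ^ 2 * ((z₁ + z₂) ^ 2 + 2 * (z₁ * z₂))) * X ^ 2
          + C (3 * A ^ 2 * (-2 * (z₁ * z₂) * (z₁ + z₂))) * X
          + C (3 * A ^ 2 * (z₁ * z₂) ^ 2) := by
      simp only [map_mul, map_add, map_neg, map_pow, map_ofNat]
      ring
    rw [expand] at h
    have e3 := congrArg (fun p : ℂ[X] => p.coeff 3) h
    have e2 := congrArg (fun p : ℂ[X] => p.coeff 2) h
    have e1 := congrArg (fun p : ℂ[X] => p.coeff 1) h
    have e0 := congrArg (fun p : ℂ[X] => p.coeff 0) h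
    simp only [coeff_add, coeff_sub, coeff_C_mul, coeff_X_pow, coeff_C, coeff_X] at e3 e2 e1 e0
    norm_num at e3 e2 e1 e0
    have hs : z₁ + z₂ = 0 := by
      rcases e1 with h1 | h1 | h1
      · exact absurd h1 hA
      · exfalso
        apply hM
        rcases h1 with rfl | rfl <;> · simp at e0; exact e0
      · exact h1
    have hB : B = 0 := by
      rw [hs] at e3
      simp at e3
      rcases e3 with h1 | h1
      · exact absurd h1 hA
      · exact h1
    refine ⟨hB, ?_⟩
    rw [hs, hB] at e2
    have hL : L = 3 * A * (z₁ * z₂) := by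
      have h2A : (2 : ℂ) * A ≠ 0 := by simp [hA]
      field_simp at e2
      apply mul_left_cancel₀ h2A
      linear_combination e2
    rw [hL]
    linear_combination (-3 : ℂ) * e0
  · rintro ⟨rfl, hL⟩
    have hL0 : L ≠ 0 := by
      intro h0
      apply hM
      have hM2 : M ^ 2 = 0 := by
        rw [h0] at hL
        linear_combination ((1 : ℂ)/3) * hL
      exact (pow_eq_zero_iff two_ne_zero).mp hM2
    obtain ⟨w, hw⟩ := IsAlgClosed.exists_pow_nat_eq (-L / (3 * A)) (n := 2) (by norm_num)
    have hw3 : 3 * A * w ^ 2 = -L := by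
      rw [hw]; field_simp
    have hw0 : w ≠ 0 := by
      intro h0
      apply hL0
      rw [h0] at hw3
      simpa [eq_comm, neg_eq_zero] using hw3
    refine ⟨w, -w, ?_, ?_⟩
    · intro h
      exact hw0 (by linear_combination ((1 : ℂ)/2) * h)
    · have key : 3 * A ^ 2 * w ^ 4 = -M ^ 2 := by
        linear_combination ((3 * A * w ^ 2 - L) / 3) * hw3 + ((1 : ℂ)/3) * hL
      have h1 : (3 : ℂ[X]) * C A * C w ^ 2 = -C L := by
        have := congrArg C hw3
        simpa only [map_mul, map_pow, map_neg, map_ofNat] using this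
      have hkey : (3 : ℂ[X]) * C A ^ 2 * C w ^ 4 = -C M ^ 2 := by
        have := congrArg C key
        simpa only [map_mul, map_pow, map_neg, map_ofNat] using this
      simp only [map_mul, map_add, map_pow, map_neg, map_ofNat, map_zero, mul_zero]
      linear_combination (2 * C A * X ^ 2) * h1 - hkey
end

section
/- Let A, B, L, M be complex numbers with A ≠ 0, M ≠ 0, L = ±M, and B² = ±4AM (same sign choice). Then the quartic 3A²z⁴ + 4ABz³ + (2AL + B²)z² − M² has a root of multiplicity three, and moreover Δ = 48A⁴(L²+3M²)² + 64A³B²L(L²−9M²) + 24A²B⁴(L²+3M²) − B⁸ = 0. -/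
open Polynomial

/-- For `A B L M : ℂ` with `A ≠ 0`, `M ≠ 0`, `L = εM` and `B² = 4εAM`
for a sign `ε = ±1`, the quartic `3A²z⁴ + 4ABz³ + (2AL + B²)z² − M²` has a root of
multiplicity three, and moreover
`Δ = 48A⁴(L²+3M²)² + 64A³B²L(L²−9M²) + 24A²B⁴(L²+3M²) − B⁸ = 0`. -/
theorem stmt8 (A B L M ε : ℂ) (hA : A ≠ 0) (hM : M ≠ 0)
    (hε : ε = 1 ∨ ε = -1) (hL : L = ε * M) (hB : B ^ 2 = ε * (4 * A * M)) :
    (∃ z : ℂ, Polynomial.rootMultiplicity z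
        (C (3 * A ^ 2) * X ^ 4 + C (4 * A * B) * X ^ 3
          + C (2 * A * L + B ^ 2) * X ^ 2 - C (M ^ 2) : ℂ[X]) = 3) ∧
    48 * A ^ 4 * (L ^ 2 + 3 * M ^ 2) ^ 2 + 64 * A ^ 3 * B ^ 2 * L * (L ^ 2 - 9 * M ^ 2)
      + 24 * A ^ 2 * B ^ 4 * (L ^ 2 + 3 * M ^ 2) - B ^ 8 = 0 := by
  have hε0 : ε ≠ 0 := by rcases hε with rfl | rfl <;> norm_num
  have hB0 : B ≠ 0 := by
    intro h
    rw [h] at hB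
    simp [eq_comm, hε0, hA, hM] at hB
  have hM' : M = ε * B ^ 2 / (4 * A) := by
    rcases hε with rfl | rfl <;> field_simp <;>
      first
        | linear_combination -3 * hB
        | linear_combination -hB
        | linear_combination 3 * hB
        | linear_combination hB
  set r : ℂ := -B / (2 * A) with hr
  set s : ℂ := B / (6 * A) with hs
  have hrs : r ≠ s := by
    rw [hr, hs]
    intro h
    apply hB0
    field_simp at h
    have h8 : (8 : ℂ) * A * B = 0 := by norm_num at h
    rcases mul_eq_zero.mp h8 with h' | h'
    · exact absurd h' (mul_ne_zero (by norm_num) hA)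
    · exact h'
  have hε2 : ε ^ 2 = 1 := by rcases hε with rfl | rfl <;> ring
  have key : (C (3 * A ^ 2) * X ^ 4 + C (4 * A * B) * X ^ 3
          + C (2 * A * L + B ^ 2) * X ^ 2 - C (M ^ 2) : ℂ[X])
      = C (3 * A ^ 2) * (X - C r) ^ 3 * (X - C s) := by
    apply Polynomial.funext
    intro x
    simp only [eval_add, eval_sub, eval_mul, eval_pow, eval_C, eval_X]
    rw [hr, hs, hL, hM']
    field_simp
    ring_nf
    linear_combination (384 * A ^ 2 * B ^ 2 * x ^ 2 - 48 * B ^ 4) * hε2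
  constructor
  · refine ⟨r, ?_⟩
    rw [key]
    have hc : (C (3 * A ^ 2) : ℂ[X]) ≠ 0 := by
      simpa using mul_ne_zero (three_ne_zero) (pow_ne_zero 2 hA)
    have hpow : ((X - C r) ^ 3 : ℂ[X]) ≠ 0 := pow_ne_zero 3 (X_sub_C_ne_zero r)
    have h2 : (X - C s : ℂ[X]) ≠ 0 := X_sub_C_ne_zero s
    rw [Polynomial.rootMultiplicity_mul (mul_ne_zero (mul_ne_zero hc hpow) h2),
        Polynomial.rootMultiplicity_mul (mul_ne_zero hc hpow),
        Polynomial.rootMultiplicity_eq_zero (by simp [IsRoot, hA]),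
        Polynomial.rootMultiplicity_X_sub_C_pow,
        Polynomial.rootMultiplicity_eq_zero (by simp [IsRoot, sub_eq_zero, hrs])]
  · rw [hL]
    rcases hε with rfl | rfl
    · linear_combination (-B ^ 6 - 4 * A * M * B ^ 4 + 80 * A ^ 2 * M ^ 2 * B ^ 2
        - 192 * A ^ 3 * M ^ 3) * hB
    · linear_combination (-B ^ 6 + 4 * A * M * B ^ 4 + 80 * A ^ 2 * M ^ 2 * B ^ 2
        + 192 * A ^ 3 * M ^ 3) * hB
end

section
/- Let R = ℂ[x,y]/((x−y²)(x+y²)) be the local model of a tacnode (A₃-singularity), R′ = ℂ[x′,y′]/((x′−y′)(x′+y′)) the node obtained by partial normalization, and R̃ = ℂ[x̃,ỹ]/((x̃−1)(x̃+1)) the full normalization, with maps R → R′ (x ↦ x′y′, y ↦ y′) and R′ → R̃ (x′ ↦ x̃ỹ, y′ ↦ ỹ). Then every torsion-free R-module of rank 1 (on a sufficiently small neighborhood of the singular point) is isomorphic to exactly one of R, R′ or R̃ as an R-module; moreover the ℂ-vector space R′/R is 1-dimensional (spanned by x′) and R̃/R is 2-dimensional (spanned by x̃ and x̃ỹ). 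-/
open MvPolynomial

/-- The tacnode local model `R = ℂ[x,y]/((x−y²)(x+y²))` (an `A₃`-singularity). -/
abbrev TacnodeModel : Type :=
  MvPolynomial (Fin 2) ℂ ⧸
    Ideal.span {((X 0 - X 1 ^ 2) * (X 0 + X 1 ^ 2) : MvPolynomial (Fin 2) ℂ)}

/-- The nodal partial normalization `R′ = ℂ[x′,y′]/((x′−y′)(x′+y′))`. -/
abbrev NodeModel : Type :=
  MvPolynomial (Fin 2) ℂ ⧸
    Ideal.span {((X 0 - X 1) * (X 0 + X 1) : MvPolynomial (Fin 2) ℂ)}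

/-- The full normalization `R̃ = ℂ[x̃,ỹ]/((x̃−1)(x̃+1))`. -/
abbrev NormModel : Type :=
  MvPolynomial (Fin 2) ℂ ⧸
    Ideal.span {((X 0 - 1) * (X 0 + 1) : MvPolynomial (Fin 2) ℂ)}

namespace Stmt19Aux

noncomputable section

abbrev PP : Type := MvPolynomial (Fin 2) ℂ

def Φm : PP →ₐ[ℂ] PP := aeval ![X 0 * X 1, X 1]
def χm : PP →ₐ[ℂ] PP := aeval ![X 0 * X 1 ^ 2, X 1]
def σ1 : PP →ₐ[ℂ] PP := aeval ![X 1 ^ 2, X 1]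
def σ2 : PP →ₐ[ℂ] PP := aeval ![-X 1 ^ 2, X 1]
def τ1 : PP →ₐ[ℂ] PP := aeval ![X 1, X 1]
def τ2 : PP →ₐ[ℂ] PP := aeval ![-X 1, X 1]
def ev1 : PP →ₐ[ℂ] PP := aeval ![1, X 1]
def ev2 : PP →ₐ[ℂ] PP := aeval ![-1, X 1]

def ℓ0 : PP → ℂ := constantCoeff
def ℓ1 : PP → ℂ := fun f => constantCoeff (pderiv 1 f)

lemma hcomp_Φ : Φm.comp Φm = χm := by
  apply MvPolynomial.algHom_ext
  intro i
  fin_cases i <;> simp [Φm, χm] <;> ring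

lemma hcomp_ev1Φ : ev1.comp Φm = τ1 := by
  apply MvPolynomial.algHom_ext
  intro i
  fin_cases i <;> simp [Φm, ev1, τ1]

lemma hcomp_ev2Φ : ev2.comp Φm = τ2 := by
  apply MvPolynomial.algHom_ext
  intro i
  fin_cases i <;> simp [Φm, ev2, τ2] <;> ring

lemma hcomp_ev1χ : ev1.comp χm = σ1 := by
  apply MvPolynomial.algHom_ext
  intro i
  fin_cases i <;> simp [χm, ev1, σ1]

lemma hcomp_ev2χ : ev2.comp χm = σ2 := by
  apply MvPolynomial.algHom_ext
  intro i
  fin_cases i <;> simp [χm, ev2, σ2] <;> ring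

lemma hcomp_τ1Φ : τ1.comp Φm = σ1 := by
  apply MvPolynomial.algHom_ext
  intro i
  fin_cases i <;> simp [Φm, τ1, σ1] <;> ring

lemma hcomp_τ2Φ : τ2.comp Φm = σ2 := by
  apply MvPolynomial.algHom_ext
  intro i
  fin_cases i <;> simp [Φm, τ2, σ2] <;> ring

-- basic ℓ computations
lemma ℓ0_mul (f g : PP) : ℓ0 (f * g) = ℓ0 f * ℓ0 g := by simp [ℓ0]
lemma ℓ0_add (f g : PP) : ℓ0 (f + g) = ℓ0 f + ℓ0 g := by simp [ℓ0]
lemma ℓ1_mul (f g : PP) : ℓ1 (f * g) = ℓ0 f * ℓ1 g + ℓ1 f * ℓ0 g := by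
  simp [ℓ1, ℓ0, pderiv_mul, mul_comm]
lemma ℓ1_add (f g : PP) : ℓ1 (f + g) = ℓ1 f + ℓ1 g := by simp [ℓ1]

/-- the key first-order probe: evaluations at the two branches agree to first order
on the image of the tacnode ring. -/
lemma probe (G : PP) : ℓ0 (σ1 G) = ℓ0 (σ2 G) ∧ ℓ1 (σ1 G) = ℓ1 (σ2 G) := by
  induction G using MvPolynomial.induction_on with
  | C a => simp [σ1, σ2, ℓ0, ℓ1]
  | add p q hp hq =>
      simp only [map_add, ℓ0_add, ℓ1_add, hp.1, hp.2, hq.1, hq.2, and_self]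
  | mul_X p i hp =>
      obtain rfl | rfl : i = 0 ∨ i = 1 := by omega
      · constructor
        · simp only [map_mul, ℓ0_mul, hp.1]
          have h1 : ℓ0 (σ1 (X 0)) = 0 := by simp [σ1, ℓ0]
          have h2 : ℓ0 (σ2 (X 0)) = 0 := by simp [σ2, ℓ0]
          rw [h1, h2]
        · simp only [map_mul, ℓ1_mul, hp.1, hp.2]
          have h1 : ℓ0 (σ1 (X 0)) = 0 := by simp [σ1, ℓ0]
          have h2 : ℓ0 (σ2 (X 0)) = 0 := by simp [σ2, ℓ0]
          have h3 : ℓ1 (σ1 (X 0)) = 0 := by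
            simp [σ1, ℓ1, pow_two, pderiv_mul]
          have h4 : ℓ1 (σ2 (X 0)) = 0 := by
            simp [σ2, ℓ1, pow_two, pderiv_mul]
          rw [h1, h2, h3, h4]
      · constructor
        · simp only [map_mul, ℓ0_mul, hp.1]
          have h1 : σ1 (X (1 : Fin 2)) = X 1 := by simp [σ1]
          have h2 : σ2 (X (1 : Fin 2)) = X 1 := by simp [σ2]
          rw [h1, h2]
        · simp only [map_mul, ℓ1_mul, hp.1, hp.2]
          have h1 : σ1 (X (1 : Fin 2)) = X 1 := by simp [σ1]
          have h2 : σ2 (X (1 : Fin 2)) = X 1 := by simp [σ2]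
          rw [h1, h2]

end

end Stmt19Aux

namespace Stmt19Aux
noncomputable section

/-- generic factor-theorem style divisibility -/
lemma sub_aeval_dvd (s : PP) (G : PP) : (X 0 - s) ∣ (G - aeval ![s, X 1] G) := by
  induction G using MvPolynomial.induction_on with
  | C a => simp
  | add p q hp hq =>
      have : p + q - aeval ![s, X 1] (p + q)
          = (p - aeval ![s, X 1] p) + (q - aeval ![s, X 1] q) := by
        rw [map_add]; ring
      rw [this]; exact dvd_add hp hq
  | mul_X p i hp =>
      obtain rfl | rfl : i = 0 ∨ i = 1 := by omega
      · have : p * X 0 - aeval ![s, X 1] (p * X 0)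
            = (p - aeval ![s, X 1] p) * X 0 + aeval ![s, X 1] p * (X 0 - s) := by
          rw [map_mul]
          have : aeval ![s, X 1] (X 0 : PP) = s := by simp
          rw [this]; ring
        rw [this]
        exact dvd_add (Dvd.dvd.mul_right hp _) (Dvd.dvd.mul_left dvd_rfl _)
      · have : p * X 1 - aeval ![s, X 1] (p * X 1)
            = (p - aeval ![s, X 1] p) * X 1 := by
          rw [map_mul]
          have : aeval ![s, X 1] (X 1 : PP) = X 1 := by simp
          rw [this]; ring
        rw [this]
        exact Dvd.dvd.mul_right hp _

lemma dvd_sub_sigma1 (G : PP) : (X 0 - X 1 ^ 2) ∣ (G - σ1 G) := sub_aeval_dvd _ G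

lemma dvd_sub_sigma2 (G : PP) : (X 0 + X 1 ^ 2) ∣ (G - σ2 G) := by
  have h := sub_aeval_dvd (-X 1 ^ 2) G
  rw [sub_neg_eq_add] at h
  exact h

lemma dvd_sub_tau1 (H : PP) : (X 0 - X 1) ∣ (H - τ1 H) := sub_aeval_dvd _ H

lemma dvd_sub_tau2 (H : PP) : (X 0 + X 1) ∣ (H - τ2 H) := by
  have h := sub_aeval_dvd (-X 1) H
  rw [sub_neg_eq_add] at h
  exact h

lemma X1_pow_ne (n : ℕ) : (2 : PP) * X 1 ^ n ≠ 0 := by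
  intro h
  have := congrArg (eval ![0, 1]) h
  simp at this

lemma ker_chi (G : PP) (h : (X 0 - 1) * (X 0 + 1) ∣ χm G) :
    (X 0 - X 1 ^ 2) * (X 0 + X 1 ^ 2) ∣ G := by
  obtain ⟨k, hk⟩ := h
  have hev1 : σ1 G = 0 := by
    have : σ1 G = ev1 (χm G) := by rw [← hcomp_ev1χ]; rfl
    rw [this, hk, map_mul, map_mul]
    have : ev1 ((X 0 : PP) - 1) = 0 := by simp [ev1]
    rw [this]; ring
  have hev2 : σ2 G = 0 := by
    have : σ2 G = ev2 (χm G) := by rw [← hcomp_ev2χ]; rfl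
    rw [this, hk, map_mul, map_mul]
    have : ev2 ((X 0 : PP) + 1) = 0 := by simp [ev2]
    rw [this]; ring
  have h1 : (X 0 - X 1 ^ 2) ∣ G := by
    have := dvd_sub_sigma1 G; rwa [hev1, sub_zero] at this
  obtain ⟨k1, hk1⟩ := h1
  have hs2k1 : σ2 k1 = 0 := by
    have h0 : σ2 G = σ2 (X 0 - X 1 ^ 2) * σ2 k1 := by rw [hk1, map_mul]
    have hval : σ2 ((X 0 : PP) - X 1 ^ 2) = -(2 * X 1 ^ 2) := by
      simp [σ2]; ring
    rw [hev2, hval] at h0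
    have h0' : (2 * X 1 ^ 2) * σ2 k1 = 0 := by
      have := h0.symm
      rw [neg_mul] at this
      exact neg_eq_zero.mp this
    rcases mul_eq_zero.mp h0' with h' | h'
    · exact absurd h' (X1_pow_ne 2)
    · exact h'
  have h2 : (X 0 + X 1 ^ 2) ∣ k1 := by
    have := dvd_sub_sigma2 k1; rwa [hs2k1, sub_zero] at this
  obtain ⟨k2, hk2⟩ := h2
  exact ⟨k2, by rw [hk1, hk2]; ring⟩

lemma ker_psi (H : PP) (h : (X 0 - 1) * (X 0 + 1) ∣ Φm H) :
    (X 0 - X 1) * (X 0 + X 1) ∣ H := by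
  obtain ⟨k, hk⟩ := h
  have hev1 : τ1 H = 0 := by
    have : τ1 H = ev1 (Φm H) := by rw [← hcomp_ev1Φ]; rfl
    rw [this, hk, map_mul, map_mul]
    have : ev1 ((X 0 : PP) - 1) = 0 := by simp [ev1]
    rw [this]; ring
  have hev2 : τ2 H = 0 := by
    have : τ2 H = ev2 (Φm H) := by rw [← hcomp_ev2Φ]; rfl
    rw [this, hk, map_mul, map_mul]
    have : ev2 ((X 0 : PP) + 1) = 0 := by simp [ev2]
    rw [this]; ring
  have h1 : (X 0 - X 1) ∣ H := by
    have := dvd_sub_tau1 H; rwa [hev1, sub_zero] at this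
  obtain ⟨k1, hk1⟩ := h1
  have hs2k1 : τ2 k1 = 0 := by
    have h0 : τ2 H = τ2 (X 0 - X 1) * τ2 k1 := by rw [hk1, map_mul]
    have hval : τ2 ((X 0 : PP) - X 1) = -(2 * X 1) := by
      simp [τ2]; ring
    rw [hev2, hval] at h0
    have h0' : (2 * X 1) * τ2 k1 = 0 := by
      have := h0.symm
      rw [neg_mul] at this
      exact neg_eq_zero.mp this
    rcases mul_eq_zero.mp h0' with h' | h'
    · exact absurd (by rw [← pow_one (X (1:Fin 2))] at h'; exact h') (X1_pow_ne 1)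
    · exact h'
  have h2 : (X 0 + X 1) ∣ k1 := by
    have := dvd_sub_tau2 k1; rwa [hs2k1, sub_zero] at this
  obtain ⟨k2, hk2⟩ := h2
  exact ⟨k2, by rw [hk1, hk2]; ring⟩

end
end Stmt19Aux

namespace Stmt19Aux
noncomputable section

@[simp] lemma Φm_X0 : Φm (X 0) = X 0 * X 1 := by simp [Φm]
@[simp] lemma Φm_X1 : Φm (X 1) = X 1 := by simp [Φm]
@[simp] lemma Φm_C (c : ℂ) : Φm (C c) = C c := by
  simp [Φm]
@[simp] lemma χm_X0 : χm (X 0) = X 0 * X 1 ^ 2 := by simp [χm]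
@[simp] lemma χm_X1 : χm (X 1) = X 1 := by simp [χm]
@[simp] lemma χm_C (c : ℂ) : χm (C c) = C c := by
  simp [χm]

def Qnode (f : PP) : Prop :=
  ∃ G c d, f = Φm G + C c * X 0 + (X 0 - X 1) * (X 0 + X 1) * d

def Qnorm (f : PP) : Prop :=
  ∃ G a b d, f = χm G + C a * X 0 + C b * (X 0 * X 1) + (X 0 - 1) * (X 0 + 1) * d

lemma node_aux (G : PP) : Qnode (Φm G * X 0) := by
  induction G using MvPolynomial.induction_on with
  | C a => exact ⟨0, a, 0, by simp⟩
  | add p q hp hq =>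
      obtain ⟨G1, c1, d1, h1⟩ := hp
      obtain ⟨G2, c2, d2, h2⟩ := hq
      exact ⟨G1 + G2, c1 + c2, d1 + d2, by
        simp only [map_add]
        linear_combination h1 + h2⟩
  | mul_X p i hp =>
      obtain rfl | rfl : i = 0 ∨ i = 1 := by omega
      · exact ⟨p * X 1 ^ 3, 0, Φm p * X 1, by
          simp only [map_mul, map_pow, Φm_X0, Φm_X1, map_zero, MvPolynomial.C_0]
          ring⟩
      · obtain ⟨G', c', d', h'⟩ := hp
        exact ⟨G' * X 1 + C c' * X 0, 0, d' * X 1, by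
          simp only [map_add, map_mul, Φm_X0, Φm_X1, Φm_C, map_zero, MvPolynomial.C_0]
          linear_combination (X 1 : PP) * h'⟩

lemma node_mulX1 {f : PP} (h : Qnode f) : Qnode (f * X 1) := by
  obtain ⟨G, c, d, hf⟩ := h
  exact ⟨G * X 1 + C c * X 0, 0, d * X 1, by
    simp only [map_add, map_mul, Φm_X0, Φm_X1, Φm_C, MvPolynomial.C_0]
    linear_combination (X 1 : PP) * hf⟩

lemma node_mulX0 {f : PP} (h : Qnode f) : Qnode (f * X 0) := by
  obtain ⟨G, c, d, hf⟩ := h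
  obtain ⟨G', c', d', h'⟩ := node_aux G
  exact ⟨G' + C c * X 1 ^ 2, c', d' + C c + d * X 0, by
    simp only [map_add, map_mul, map_pow, Φm_X0, Φm_X1, Φm_C]
    linear_combination (X 0 : PP) * hf + h'⟩

lemma node_span (f : PP) : Qnode f := by
  induction f using MvPolynomial.induction_on with
  | C a => exact ⟨C a, 0, 0, by simp⟩
  | add p q hp hq =>
      obtain ⟨G1, c1, d1, h1⟩ := hp
      obtain ⟨G2, c2, d2, h2⟩ := hq
      exact ⟨G1 + G2, c1 + c2, d1 + d2, by
        simp only [map_add]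
        linear_combination h1 + h2⟩
  | mul_X p i hp =>
      obtain rfl | rfl : i = 0 ∨ i = 1 := by omega
      · exact node_mulX0 hp
      · exact node_mulX1 hp

lemma norm_aux (G : PP) : Qnorm (χm G * X 0) := by
  induction G using MvPolynomial.induction_on with
  | C a => exact ⟨0, a, 0, 0, by simp⟩
  | add p q hp hq =>
      obtain ⟨G1, a1, b1, d1, h1⟩ := hp
      obtain ⟨G2, a2, b2, d2, h2⟩ := hq
      exact ⟨G1 + G2, a1 + a2, b1 + b2, d1 + d2, by
        simp only [map_add]
        linear_combination h1 + h2⟩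
  | mul_X p i hp =>
      obtain rfl | rfl : i = 0 ∨ i = 1 := by omega
      · exact ⟨p * X 1 ^ 2, 0, 0, χm p * X 1 ^ 2, by
          simp only [map_mul, map_pow, χm_X0, χm_X1, map_zero, MvPolynomial.C_0]
          ring⟩
      · obtain ⟨G', a', b', d', h'⟩ := hp
        exact ⟨G' * X 1 + C b' * X 0, 0, a', d' * X 1, by
          simp only [map_add, map_mul, map_pow, χm_X0, χm_X1, χm_C, map_zero, MvPolynomial.C_0]
          linear_combination (X 1 : PP) * h'⟩

lemma norm_mulX1 {f : PP} (h : Qnorm f) : Qnorm (f * X 1) := by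
  obtain ⟨G, a, b, d, hf⟩ := h
  exact ⟨G * X 1 + C b * X 0, 0, a, d * X 1, by
    simp only [map_add, map_mul, map_pow, χm_X0, χm_X1, χm_C, MvPolynomial.C_0]
    linear_combination (X 1 : PP) * hf⟩

lemma norm_mulX0 {f : PP} (h : Qnorm f) : Qnorm (f * X 0) := by
  obtain ⟨G, a, b, d, hf⟩ := h
  obtain ⟨G', a', b', d', h'⟩ := norm_aux G
  exact ⟨G' + C a + C b * X 1, a', b', d' + C a + C b * X 1 + d * X 0, by
    simp only [map_add, map_mul, map_pow, χm_X0, χm_X1, χm_C]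
    linear_combination (X 0 : PP) * hf + h'⟩

lemma norm_span (f : PP) : Qnorm f := by
  induction f using MvPolynomial.induction_on with
  | C a => exact ⟨C a, 0, 0, 0, by simp⟩
  | add p q hp hq =>
      obtain ⟨G1, a1, b1, d1, h1⟩ := hp
      obtain ⟨G2, a2, b2, d2, h2⟩ := hq
      exact ⟨G1 + G2, a1 + a2, b1 + b2, d1 + d2, by
        simp only [map_add]
        linear_combination h1 + h2⟩
  | mul_X p i hp =>
      obtain rfl | rfl : i = 0 ∨ i = 1 := by omega
      · exact norm_mulX0 hp
      · exact norm_mulX1 hp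

end
end Stmt19Aux

namespace Stmt19Aux
noncomputable section

lemma kill_norm_ev1 : ∀ a ∈ Ideal.span {((X 0 - 1) * (X 0 + 1) : PP)}, ev1 a = 0 := by
  intro a ha
  rw [Ideal.mem_span_singleton] at ha
  obtain ⟨d, rfl⟩ := ha
  rw [map_mul, map_mul]
  have h : ev1 ((X 0 : PP) - 1) = 0 := by simp [ev1]
  rw [h, zero_mul, zero_mul]

lemma kill_norm_ev2 : ∀ a ∈ Ideal.span {((X 0 - 1) * (X 0 + 1) : PP)}, ev2 a = 0 := by
  intro a ha
  rw [Ideal.mem_span_singleton] at ha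
  obtain ⟨d, rfl⟩ := ha
  rw [map_mul, map_mul]
  have h : ev2 ((X 0 : PP) + 1) = 0 := by simp [ev2]
  rw [h, mul_zero, zero_mul]

lemma kill_node_tau1 : ∀ a ∈ Ideal.span {((X 0 - X 1) * (X 0 + X 1) : PP)}, τ1 a = 0 := by
  intro a ha
  rw [Ideal.mem_span_singleton] at ha
  obtain ⟨d, rfl⟩ := ha
  rw [map_mul, map_mul]
  have h : τ1 ((X 0 : PP) - X 1) = 0 := by simp [τ1]
  rw [h, zero_mul, zero_mul]

lemma kill_node_tau2 : ∀ a ∈ Ideal.span {((X 0 - X 1) * (X 0 + X 1) : PP)}, τ2 a = 0 := by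
  intro a ha
  rw [Ideal.mem_span_singleton] at ha
  obtain ⟨d, rfl⟩ := ha
  rw [map_mul, map_mul]
  have h : τ2 ((X 0 : PP) + X 1) = 0 := by simp [τ2]
  rw [h, mul_zero, zero_mul]

def en1 : NormModel →ₐ[ℂ] PP := Ideal.Quotient.liftₐ _ ev1 kill_norm_ev1
def en2 : NormModel →ₐ[ℂ] PP := Ideal.Quotient.liftₐ _ ev2 kill_norm_ev2
def n1 : NodeModel →ₐ[ℂ] PP := Ideal.Quotient.liftₐ _ τ1 kill_node_tau1
def n2 : NodeModel →ₐ[ℂ] PP := Ideal.Quotient.liftₐ _ τ2 kill_node_tau2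

@[simp] lemma en1_mk (f : PP) : en1 (Ideal.Quotient.mk _ f) = ev1 f := by
  rw [en1, Ideal.Quotient.liftₐ_apply]; rfl
@[simp] lemma en2_mk (f : PP) : en2 (Ideal.Quotient.mk _ f) = ev2 f := by
  rw [en2, Ideal.Quotient.liftₐ_apply]; rfl
@[simp] lemma n1_mk (f : PP) : n1 (Ideal.Quotient.mk _ f) = τ1 f := by
  rw [n1, Ideal.Quotient.liftₐ_apply]; rfl
@[simp] lemma n2_mk (f : PP) : n2 (Ideal.Quotient.mk _ f) = τ2 f := by
  rw [n2, Ideal.Quotient.liftₐ_apply]; rfl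

end
end Stmt19Aux

namespace Stmt19Aux
noncomputable section

-- small value lemmas
@[simp] lemma ℓ0_one : ℓ0 (1 : PP) = 1 := by simp [ℓ0]
@[simp] lemma ℓ1_one : ℓ1 (1 : PP) = 0 := by simp [ℓ1]
@[simp] lemma ℓ0_X1 : ℓ0 (X 1 : PP) = 0 := by simp [ℓ0]
@[simp] lemma ℓ1_X1 : ℓ1 (X 1 : PP) = 1 := by simp [ℓ1]
@[simp] lemma ℓ0_neg (f : PP) : ℓ0 (-f) = -ℓ0 f := by simp [ℓ0]
@[simp] lemma ℓ1_neg (f : PP) : ℓ1 (-f) = -ℓ1 f := by simp [ℓ1]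
@[simp] lemma ℓ0_negone : ℓ0 (-1 : PP) = -1 := by simp [ℓ0]
@[simp] lemma ℓ1_negone : ℓ1 (-1 : PP) = 0 := by simp [ℓ1]
lemma ℓ0_smul (c : ℂ) (f : PP) : ℓ0 (c • f) = c * ℓ0 f := by
  rw [smul_eq_C_mul, ℓ0_mul]; simp [ℓ0]
lemma ℓ1_smul (c : ℂ) (f : PP) : ℓ1 (c • f) = c * ℓ1 f := by
  rw [smul_eq_C_mul, ℓ1_mul]; simp [ℓ0, ℓ1]

@[simp] lemma ev1_X0 : ev1 (X 0 : PP) = 1 := by simp [ev1]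
@[simp] lemma ev2_X0 : ev2 (X 0 : PP) = -1 := by simp [ev2]
@[simp] lemma ev1_X1 : ev1 (X 1 : PP) = X 1 := by simp [ev1]
@[simp] lemma ev2_X1 : ev2 (X 1 : PP) = X 1 := by simp [ev2]
@[simp] lemma τ1_X0 : τ1 (X 0 : PP) = X 1 := by simp [τ1]
@[simp] lemma τ2_X0 : τ2 (X 0 : PP) = -X 1 := by simp [τ2]
@[simp] lemma τ1_X1 : τ1 (X 1 : PP) = X 1 := by simp [τ1]
@[simp] lemma τ2_X1 : τ2 (X 1 : PP) = X 1 := by simp [τ2]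

lemma ev1_chi (G : PP) : ev1 (χm G) = σ1 G := AlgHom.congr_fun hcomp_ev1χ G
lemma ev2_chi (G : PP) : ev2 (χm G) = σ2 G := AlgHom.congr_fun hcomp_ev2χ G
lemma tau1_phi (G : PP) : τ1 (Φm G) = σ1 G := AlgHom.congr_fun hcomp_τ1Φ G
lemma tau2_phi (G : PP) : τ2 (Φm G) = σ2 G := AlgHom.congr_fun hcomp_τ2Φ G

section AbstractNorm
variable {Rt : Type} [CommRing Rt] [Algebra ℂ Rt] (eRt : Rt ≃ₐ[ℂ] NormModel)

def La (w : Rt) : ℂ := ℓ0 (en1 (eRt w))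
def Lb (w : Rt) : ℂ := ℓ1 (en1 (eRt w))
def Lc (w : Rt) : ℂ := ℓ0 (en2 (eRt w))
def Ld (w : Rt) : ℂ := ℓ1 (en2 (eRt w))

lemma La_add (u v : Rt) : La eRt (u + v) = La eRt u + La eRt v := by simp [La, ℓ0_add]
lemma Lb_add (u v : Rt) : Lb eRt (u + v) = Lb eRt u + Lb eRt v := by simp [Lb, ℓ1_add]
lemma Lc_add (u v : Rt) : Lc eRt (u + v) = Lc eRt u + Lc eRt v := by simp [Lc, ℓ0_add]
lemma Ld_add (u v : Rt) : Ld eRt (u + v) = Ld eRt u + Ld eRt v := by simp [Ld, ℓ1_add]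

lemma La_smul (c : ℂ) (w : Rt) : La eRt (c • w) = c * La eRt w := by
  simp [La, map_smul, ℓ0_smul]
lemma Lb_smul (c : ℂ) (w : Rt) : Lb eRt (c • w) = c * Lb eRt w := by
  simp [Lb, map_smul, ℓ1_smul]
lemma Lc_smul (c : ℂ) (w : Rt) : Lc eRt (c • w) = c * Lc eRt w := by
  simp [Lc, map_smul, ℓ0_smul]
lemma Ld_smul (c : ℂ) (w : Rt) : Ld eRt (c • w) = c * Ld eRt w := by
  simp [Ld, map_smul, ℓ1_smul]

lemma La_mul (u w : Rt) : La eRt (u * w) = La eRt u * La eRt w := by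
  simp [La, map_mul, ℓ0_mul]
lemma Lb_mul (u w : Rt) : Lb eRt (u * w) = La eRt u * Lb eRt w + Lb eRt u * La eRt w := by
  simp [La, Lb, map_mul, ℓ1_mul]
lemma Lc_mul (u w : Rt) : Lc eRt (u * w) = Lc eRt u * Lc eRt w := by
  simp [Lc, map_mul, ℓ0_mul]
lemma Ld_mul (u w : Rt) : Ld eRt (u * w) = Lc eRt u * Ld eRt w + Ld eRt u * Lc eRt w := by
  simp [Lc, Ld, map_mul, ℓ1_mul]

lemma L_chi (G : PP) :
    La eRt (eRt.symm (Ideal.Quotient.mk _ (χm G))) = ℓ0 (σ1 G) ∧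
    Lb eRt (eRt.symm (Ideal.Quotient.mk _ (χm G))) = ℓ1 (σ1 G) ∧
    Lc eRt (eRt.symm (Ideal.Quotient.mk _ (χm G))) = ℓ0 (σ1 G) ∧
    Ld eRt (eRt.symm (Ideal.Quotient.mk _ (χm G))) = ℓ1 (σ1 G) := by
  refine ⟨?_, ?_, ?_, ?_⟩ <;>
    simp only [La, Lb, Lc, Ld, AlgEquiv.apply_symm_apply, en1_mk, en2_mk,
      ev1_chi, ev2_chi]
  · exact (probe G).1.symm
  · exact (probe G).2.symm

lemma L_one :
    La eRt 1 = 1 ∧ Lb eRt 1 = 0 ∧ Lc eRt 1 = 1 ∧ Ld eRt 1 = 0 := by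
  refine ⟨?_, ?_, ?_, ?_⟩ <;> simp [La, Lb, Lc, Ld]

lemma L_xt :
    La eRt (eRt.symm (Ideal.Quotient.mk _ (X 0))) = 1 ∧
    Lb eRt (eRt.symm (Ideal.Quotient.mk _ (X 0))) = 0 ∧
    Lc eRt (eRt.symm (Ideal.Quotient.mk _ (X 0))) = -1 ∧
    Ld eRt (eRt.symm (Ideal.Quotient.mk _ (X 0))) = 0 := by
  refine ⟨?_, ?_, ?_, ?_⟩ <;>
    simp [La, Lb, Lc, Ld, AlgEquiv.apply_symm_apply]

lemma L_yt :
    La eRt (eRt.symm (Ideal.Quotient.mk _ (X 1))) = 0 ∧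
    Lb eRt (eRt.symm (Ideal.Quotient.mk _ (X 1))) = 1 ∧
    Lc eRt (eRt.symm (Ideal.Quotient.mk _ (X 1))) = 0 ∧
    Ld eRt (eRt.symm (Ideal.Quotient.mk _ (X 1))) = 1 := by
  refine ⟨?_, ?_, ?_, ?_⟩ <;>
    simp [La, Lb, Lc, Ld, AlgEquiv.apply_symm_apply]

lemma L_xyt :
    La eRt (eRt.symm (Ideal.Quotient.mk _ (X 0 * X 1))) = 0 ∧
    Lb eRt (eRt.symm (Ideal.Quotient.mk _ (X 0 * X 1))) = 1 ∧
    Lc eRt (eRt.symm (Ideal.Quotient.mk _ (X 0 * X 1))) = 0 ∧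
    Ld eRt (eRt.symm (Ideal.Quotient.mk _ (X 0 * X 1))) = -1 := by
  refine ⟨?_, ?_, ?_, ?_⟩ <;>
    simp [La, Lb, Lc, Ld, AlgEquiv.apply_symm_apply, map_mul, ℓ0_mul, ℓ1_mul]

end AbstractNorm

section AbstractNode
variable {R' : Type} [CommRing R'] [Algebra ℂ R'] (eR' : R' ≃ₐ[ℂ] NodeModel)

def Na (w : R') : ℂ := ℓ0 (n1 (eR' w))
def Nb (w : R') : ℂ := ℓ1 (n1 (eR' w))
def Nc (w : R') : ℂ := ℓ0 (n2 (eR' w))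
def Nd (w : R') : ℂ := ℓ1 (n2 (eR' w))

lemma Na_add (u v : R') : Na eR' (u + v) = Na eR' u + Na eR' v := by simp [Na, ℓ0_add]
lemma Nb_add (u v : R') : Nb eR' (u + v) = Nb eR' u + Nb eR' v := by simp [Nb, ℓ1_add]
lemma Nc_add (u v : R') : Nc eR' (u + v) = Nc eR' u + Nc eR' v := by simp [Nc, ℓ0_add]
lemma Nd_add (u v : R') : Nd eR' (u + v) = Nd eR' u + Nd eR' v := by simp [Nd, ℓ1_add]

lemma Na_smul (c : ℂ) (w : R') : Na eR' (c • w) = c * Na eR' w := by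
  simp [Na, map_smul, ℓ0_smul]
lemma Nb_smul (c : ℂ) (w : R') : Nb eR' (c • w) = c * Nb eR' w := by
  simp [Nb, map_smul, ℓ1_smul]
lemma Nc_smul (c : ℂ) (w : R') : Nc eR' (c • w) = c * Nc eR' w := by
  simp [Nc, map_smul, ℓ0_smul]
lemma Nd_smul (c : ℂ) (w : R') : Nd eR' (c • w) = c * Nd eR' w := by
  simp [Nd, map_smul, ℓ1_smul]

lemma Na_mul (u w : R') : Na eR' (u * w) = Na eR' u * Na eR' w := by
  simp [Na, map_mul, ℓ0_mul]
lemma Nb_mul (u w : R') : Nb eR' (u * w) = Na eR' u * Nb eR' w + Nb eR' u * Na eR' w := by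
  simp [Na, Nb, map_mul, ℓ1_mul]
lemma Nc_mul (u w : R') : Nc eR' (u * w) = Nc eR' u * Nc eR' w := by
  simp [Nc, map_mul, ℓ0_mul]
lemma Nd_mul (u w : R') : Nd eR' (u * w) = Nc eR' u * Nd eR' w + Nd eR' u * Nc eR' w := by
  simp [Nc, Nd, map_mul, ℓ1_mul]

lemma N_phi (G : PP) :
    Na eR' (eR'.symm (Ideal.Quotient.mk _ (Φm G))) = ℓ0 (σ1 G) ∧
    Nb eR' (eR'.symm (Ideal.Quotient.mk _ (Φm G))) = ℓ1 (σ1 G) ∧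
    Nc eR' (eR'.symm (Ideal.Quotient.mk _ (Φm G))) = ℓ0 (σ1 G) ∧
    Nd eR' (eR'.symm (Ideal.Quotient.mk _ (Φm G))) = ℓ1 (σ1 G) := by
  refine ⟨?_, ?_, ?_, ?_⟩ <;>
    simp only [Na, Nb, Nc, Nd, AlgEquiv.apply_symm_apply, n1_mk, n2_mk,
      tau1_phi, tau2_phi]
  · exact (probe G).1.symm
  · exact (probe G).2.symm

lemma N_one :
    Na eR' 1 = 1 ∧ Nb eR' 1 = 0 ∧ Nc eR' 1 = 1 ∧ Nd eR' 1 = 0 := by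
  refine ⟨?_, ?_, ?_, ?_⟩ <;> simp [Na, Nb, Nc, Nd]

lemma N_x' :
    Na eR' (eR'.symm (Ideal.Quotient.mk _ (X 0))) = 0 ∧
    Nb eR' (eR'.symm (Ideal.Quotient.mk _ (X 0))) = 1 ∧
    Nc eR' (eR'.symm (Ideal.Quotient.mk _ (X 0))) = 0 ∧
    Nd eR' (eR'.symm (Ideal.Quotient.mk _ (X 0))) = -1 := by
  refine ⟨?_, ?_, ?_, ?_⟩ <;>
    simp [Na, Nb, Nc, Nd, AlgEquiv.apply_symm_apply]

end AbstractNode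

end
end Stmt19Aux

namespace Stmt19Aux
noncomputable section

section AbstractNorm2
variable {Rt : Type} [CommRing Rt] [Algebra ℂ Rt] (eRt : Rt ≃ₐ[ℂ] NormModel)

def D1 (w : Rt) : ℂ := (La eRt w - Lc eRt w) / 2
def D2 (w : Rt) : ℂ := (Lb eRt w - Ld eRt w) / 2

lemma D1_add (u v : Rt) : D1 eRt (u + v) = D1 eRt u + D1 eRt v := by
  simp only [D1, La_add, Lc_add]; ring
lemma D2_add (u v : Rt) : D2 eRt (u + v) = D2 eRt u + D2 eRt v := by
  simp only [D2, Lb_add, Ld_add]; ring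
lemma D1_smul (c : ℂ) (w : Rt) : D1 eRt (c • w) = c * D1 eRt w := by
  simp only [D1, La_smul, Lc_smul]; ring
lemma D2_smul (c : ℂ) (w : Rt) : D2 eRt (c • w) = c * D2 eRt w := by
  simp only [D2, Lb_smul, Ld_smul]; ring

lemma D1_chi_mul (G : PP) (w : Rt) :
    D1 eRt (eRt.symm (Ideal.Quotient.mk _ (χm G)) * w) = ℓ0 (σ1 G) * D1 eRt w := by
  obtain ⟨h1, h2, h3, h4⟩ := L_chi eRt G
  simp only [D1, La_mul, Lc_mul, h1, h3]; ring
lemma D2_chi_mul (G : PP) (w : Rt) :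
    D2 eRt (eRt.symm (Ideal.Quotient.mk _ (χm G)) * w)
      = ℓ0 (σ1 G) * D2 eRt w + ℓ1 (σ1 G) * D1 eRt w := by
  obtain ⟨h1, h2, h3, h4⟩ := L_chi eRt G
  simp only [D1, D2, Lb_mul, Ld_mul, h1, h2, h3, h4]; ring

lemma D1_one : D1 eRt 1 = 0 := by
  obtain ⟨h1, h2, h3, h4⟩ := L_one eRt; simp only [D1, h1, h3]; norm_num
lemma D2_one : D2 eRt 1 = 0 := by
  obtain ⟨h1, h2, h3, h4⟩ := L_one eRt; simp only [D2, h2, h4]; norm_num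
lemma D1_xt : D1 eRt (eRt.symm (Ideal.Quotient.mk _ (X 0))) = 1 := by
  obtain ⟨h1, h2, h3, h4⟩ := L_xt eRt; simp only [D1, h1, h3]; norm_num
lemma D2_xt : D2 eRt (eRt.symm (Ideal.Quotient.mk _ (X 0))) = 0 := by
  obtain ⟨h1, h2, h3, h4⟩ := L_xt eRt; simp only [D2, h2, h4]; norm_num
lemma D1_xyt : D1 eRt (eRt.symm (Ideal.Quotient.mk _ (X 0 * X 1))) = 0 := by
  obtain ⟨h1, h2, h3, h4⟩ := L_xyt eRt; simp only [D1, h1, h3]; norm_num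
lemma D2_xyt : D2 eRt (eRt.symm (Ideal.Quotient.mk _ (X 0 * X 1))) = 1 := by
  obtain ⟨h1, h2, h3, h4⟩ := L_xyt eRt; simp only [D2, h2, h4]; norm_num

def Dmap : Rt →ₗ[ℂ] (ℂ × ℂ) where
  toFun := fun w => (D1 eRt w, D2 eRt w)
  map_add' := by
    intro u v
    simp only [D1_add, D2_add, Prod.mk_add_mk]
  map_smul' := by
    intro c v
    simp only [D1_smul, D2_smul, RingHom.id_apply, Prod.smul_mk, smul_eq_mul]

@[simp] lemma Dmap_apply (w : Rt) : Dmap eRt w = (D1 eRt w, D2 eRt w) := rfl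

end AbstractNorm2

section AbstractNode2
variable {R' : Type} [CommRing R'] [Algebra ℂ R'] (eR' : R' ≃ₐ[ℂ] NodeModel)

def μfun : R' →ₗ[ℂ] ℂ where
  toFun := fun v => (Nb eR' v - Nd eR' v) / 2
  map_add' := by intro u v; simp only [Nb_add, Nd_add]; ring
  map_smul' := by intro c v; simp only [Nb_smul, Nd_smul, RingHom.id_apply, smul_eq_mul]; ring

@[simp] lemma μfun_apply (v : R') : μfun eR' v = (Nb eR' v - Nd eR' v) / 2 := rfl

lemma μ_phi (G : PP) : μfun eR' (eR'.symm (Ideal.Quotient.mk _ (Φm G))) = 0 := by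
  obtain ⟨h1, h2, h3, h4⟩ := N_phi eR' G
  simp only [μfun_apply, h2, h4]; ring

lemma μ_x' : μfun eR' (eR'.symm (Ideal.Quotient.mk _ (X 0))) = 1 := by
  obtain ⟨h1, h2, h3, h4⟩ := N_x' eR'
  simp only [μfun_apply, h2, h4]; norm_num

end AbstractNode2

end
end Stmt19Aux


set_option maxHeartbeats 2000000
open Stmt19Aux

/-- Let `R → R′ → R̃` be the tacnode, its partial normalization (a node)
and its full normalization, with maps `x ↦ x′y′, y ↦ y′` and `x′ ↦ x̃ỹ, y′ ↦ ỹ`.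
Then `R′/R` is a 1-dimensional `ℂ`-vector space spanned by `x′`, `R̃/R` is a
2-dimensional `ℂ`-vector space spanned by `x̃` and `x̃ỹ`, and every torsion-free
rank-1 `R`-module (normalized so that `R ⊆ M ⊆ R̃`, i.e. an `R`-submodule of `R̃`
containing `1`) is isomorphic as an `R`-module to exactly one of `R`, `R′`, `R̃`. -/
theorem stmt19
    (R R' Rt : Type) [CommRing R] [CommRing R'] [CommRing Rt]
    [Algebra ℂ R] [Algebra ℂ R'] [Algebra ℂ Rt]
    (eR : R ≃ₐ[ℂ] TacnodeModel) (eR' : R' ≃ₐ[ℂ] NodeModel) (eRt : Rt ≃ₐ[ℂ] NormModel)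
    (φ : R →ₐ[ℂ] R') (ψ : R' →ₐ[ℂ] Rt)
    (hφx : φ (eR.symm (Ideal.Quotient.mk _ (X 0))) = eR'.symm (Ideal.Quotient.mk _ (X 0 * X 1)))
    (hφy : φ (eR.symm (Ideal.Quotient.mk _ (X 1))) = eR'.symm (Ideal.Quotient.mk _ (X 1)))
    (hψx : ψ (eR'.symm (Ideal.Quotient.mk _ (X 0))) = eRt.symm (Ideal.Quotient.mk _ (X 0 * X 1)))
    (hψy : ψ (eR'.symm (Ideal.Quotient.mk _ (X 1))) = eRt.symm (Ideal.Quotient.mk _ (X 1))) :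
    Module.finrank ℂ (R' ⧸ LinearMap.range φ.toLinearMap) = 1 ∧
    Submodule.span ℂ
        {(Submodule.Quotient.mk (eR'.symm (Ideal.Quotient.mk _ (X 0))) :
          R' ⧸ LinearMap.range φ.toLinearMap)} = ⊤ ∧
    Module.finrank ℂ (Rt ⧸ LinearMap.range (ψ.comp φ).toLinearMap) = 2 ∧
    Submodule.span ℂ
        {(Submodule.Quotient.mk (eRt.symm (Ideal.Quotient.mk _ (X 0))) :
            Rt ⧸ LinearMap.range (ψ.comp φ).toLinearMap),
         (Submodule.Quotient.mk (eRt.symm (Ideal.Quotient.mk _ (X 0 * X 1))) :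
            Rt ⧸ LinearMap.range (ψ.comp φ).toLinearMap)} = ⊤ ∧
    (letI : Module R Rt := ((ψ.comp φ) : R →+* Rt).toModule
     letI : Module R R' := (φ : R →+* R').toModule
     ∀ M : Submodule R Rt, (1 : Rt) ∈ M →
       (Nonempty (M ≃ₗ[R] R) ∨ Nonempty (M ≃ₗ[R] R') ∨ Nonempty (M ≃ₗ[R] Rt)) ∧
       ¬(Nonempty (M ≃ₗ[R] R) ∧ Nonempty (M ≃ₗ[R] R')) ∧
       ¬(Nonempty (M ≃ₗ[R] R) ∧ Nonempty (M ≃ₗ[R] Rt)) ∧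
       ¬(Nonempty (M ≃ₗ[R] R') ∧ Nonempty (M ≃ₗ[R] Rt))) := by
  classical
  -- transported identities
  have hE1 : ∀ G : PP, φ (eR.symm (Ideal.Quotient.mk _ G))
      = eR'.symm (Ideal.Quotient.mk _ (Φm G)) := by
    have h : (φ.comp (eR.symm.toAlgHom.comp (Ideal.Quotient.mkₐ ℂ _)))
        = ((eR'.symm.toAlgHom.comp (Ideal.Quotient.mkₐ ℂ _)).comp Φm) := by
      apply MvPolynomial.algHom_ext
      intro i
      obtain rfl | rfl : i = 0 ∨ i = 1 := by omega
      · simpa using hφx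
      · simpa using hφy
    intro G
    simpa using AlgHom.congr_fun h G
  have hE2 : ∀ H : PP, ψ (eR'.symm (Ideal.Quotient.mk _ H))
      = eRt.symm (Ideal.Quotient.mk _ (Φm H)) := by
    have h : (ψ.comp (eR'.symm.toAlgHom.comp (Ideal.Quotient.mkₐ ℂ _)))
        = ((eRt.symm.toAlgHom.comp (Ideal.Quotient.mkₐ ℂ _)).comp Φm) := by
      apply MvPolynomial.algHom_ext
      intro i
      obtain rfl | rfl : i = 0 ∨ i = 1 := by omega
      · simpa using hψx
      · simpa using hψy
    intro H
    simpa using AlgHom.congr_fun h H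
  have hE3 : ∀ G : PP, ψ (φ (eR.symm (Ideal.Quotient.mk _ G)))
      = eRt.symm (Ideal.Quotient.mk _ (χm G)) := by
    intro G
    have h4 : Φm (Φm G) = χm G := by
      have := AlgHom.congr_fun hcomp_Φ G
      simpa using this
    rw [hE1, hE2, h4]
  -- surjectivity of representatives
  have hsT : ∀ r : R, ∃ G : PP, r = eR.symm (Ideal.Quotient.mk _ G) := by
    intro r
    obtain ⟨G, hG⟩ := Ideal.Quotient.mk_surjective (eR r)
    exact ⟨G, by rw [hG, AlgEquiv.symm_apply_apply]⟩
  have hsN : ∀ v : R', ∃ H : PP, v = eR'.symm (Ideal.Quotient.mk _ H) := by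
    intro v
    obtain ⟨H, hH⟩ := Ideal.Quotient.mk_surjective (eR' v)
    exact ⟨H, by rw [hH, AlgEquiv.symm_apply_apply]⟩
  have hsNo : ∀ w : Rt, ∃ f : PP, w = eRt.symm (Ideal.Quotient.mk _ f) := by
    intro w
    obtain ⟨f, hf⟩ := Ideal.Quotient.mk_surjective (eRt w)
    exact ⟨f, by rw [hf, AlgEquiv.symm_apply_apply]⟩
  -- quotient equalities
  have hmkN : ∀ f g : PP,
      (Ideal.Quotient.mk (Ideal.span {((X 0 - X 1) * (X 0 + X 1) : PP)}) f
        = Ideal.Quotient.mk _ g) ↔ (X 0 - X 1) * (X 0 + X 1) ∣ (f - g) := by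
    intro f g
    rw [Ideal.Quotient.mk_eq_mk_iff_sub_mem, Ideal.mem_span_singleton]
  have hmkNo : ∀ f g : PP,
      (Ideal.Quotient.mk (Ideal.span {((X 0 - 1) * (X 0 + 1) : PP)}) f
        = Ideal.Quotient.mk _ g) ↔ (X 0 - 1) * (X 0 + 1) ∣ (f - g) := by
    intro f g
    rw [Ideal.Quotient.mk_eq_mk_iff_sub_mem, Ideal.mem_span_singleton]
  have hmkT : ∀ f g : PP,
      (Ideal.Quotient.mk (Ideal.span {((X 0 - X 1 ^ 2) * (X 0 + X 1 ^ 2) : PP)}) f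
        = Ideal.Quotient.mk _ g) ↔ (X 0 - X 1 ^ 2) * (X 0 + X 1 ^ 2) ∣ (f - g) := by
    intro f g
    rw [Ideal.Quotient.mk_eq_mk_iff_sub_mem, Ideal.mem_span_singleton]
  -- scalar action through the quotient models
  have hsmulN : ∀ (c : ℂ) (f : PP),
      c • (eR'.symm (Ideal.Quotient.mk _ f) : R')
        = eR'.symm (Ideal.Quotient.mk _ (C c * f)) := by
    intro c f
    rw [← map_smul]
    congr 1
    rw [← smul_eq_C_mul]
    exact (map_smul (Ideal.Quotient.mkₐ ℂ _) c f).symm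
  have hsmulNo : ∀ (c : ℂ) (f : PP),
      c • (eRt.symm (Ideal.Quotient.mk _ f) : Rt)
        = eRt.symm (Ideal.Quotient.mk _ (C c * f)) := by
    intro c f
    rw [← map_smul]
    congr 1
    rw [← smul_eq_C_mul]
    exact (map_smul (Ideal.Quotient.mkₐ ℂ _) c f).symm
  -- decomposition of elements of R'
  have hdecN : ∀ v : R', ∃ G : PP,
      v = eR'.symm (Ideal.Quotient.mk _ (Φm G))
        + μfun eR' v • eR'.symm (Ideal.Quotient.mk _ (X 0)) := by
    intro v
    obtain ⟨H, rfl⟩ := hsN v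
    obtain ⟨G, c, d, hH⟩ := node_span H
    have hmk : Ideal.Quotient.mk (Ideal.span {((X 0 - X 1) * (X 0 + X 1) : PP)}) H
        = Ideal.Quotient.mk _ (Φm G + C c * X 0) := by
      rw [hmkN]
      exact ⟨d, by linear_combination hH⟩
    have hv : eR'.symm (Ideal.Quotient.mk _ H)
        = eR'.symm (Ideal.Quotient.mk _ (Φm G))
          + c • eR'.symm (Ideal.Quotient.mk _ (X 0)) := by
      rw [hsmulN, ← map_add, hmk, ← map_add]
    have hμ : μfun eR' (eR'.symm (Ideal.Quotient.mk _ H)) = c := by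
      rw [hv, map_add, map_smul, μ_phi, μ_x', zero_add, smul_eq_mul, mul_one]
    exact ⟨G, by rw [hμ, hv]⟩
  -- decomposition of elements of Rt
  have hdecNo : ∀ w : Rt, ∃ G : PP,
      w = eRt.symm (Ideal.Quotient.mk _ (χm G))
        + D1 eRt w • eRt.symm (Ideal.Quotient.mk _ (X 0))
        + D2 eRt w • eRt.symm (Ideal.Quotient.mk _ (X 0 * X 1)) := by
    intro w
    obtain ⟨f, rfl⟩ := hsNo w
    obtain ⟨G, a, b, d, hf⟩ := norm_span f
    have hmk : Ideal.Quotient.mk (Ideal.span {((X 0 - 1) * (X 0 + 1) : PP)}) f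
        = Ideal.Quotient.mk _ (χm G + C a * X 0 + C b * (X 0 * X 1)) := by
      rw [hmkNo]
      exact ⟨d, by linear_combination hf⟩
    have hv : eRt.symm (Ideal.Quotient.mk _ f)
        = eRt.symm (Ideal.Quotient.mk _ (χm G))
          + a • eRt.symm (Ideal.Quotient.mk _ (X 0))
          + b • eRt.symm (Ideal.Quotient.mk _ (X 0 * X 1)) := by
      rw [hsmulNo, hsmulNo, ← map_add, ← map_add, hmk, ← map_add, ← map_add]
    have hchi0 : D1 eRt (eRt.symm (Ideal.Quotient.mk _ (χm G))) = 0 := by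
      have := D1_chi_mul eRt G 1
      rwa [mul_one, D1_one, mul_zero] at this
    have hchi0' : D2 eRt (eRt.symm (Ideal.Quotient.mk _ (χm G))) = 0 := by
      have := D2_chi_mul eRt G 1
      rwa [mul_one, D1_one, D2_one, mul_zero, mul_zero, add_zero] at this
    have hD1 : D1 eRt (eRt.symm (Ideal.Quotient.mk _ f)) = a := by
      rw [hv, D1_add, D1_add, hchi0, D1_smul, D1_smul, D1_xt, D1_xyt]
      ring
    have hD2 : D2 eRt (eRt.symm (Ideal.Quotient.mk _ f)) = b := by
      rw [hv, D2_add, D2_add, hchi0', D2_smul, D2_smul, D2_xt, D2_xyt]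
      ring
    exact ⟨G, by rw [hD1, hD2, hv]⟩
  refine ⟨?_, ?_, ?_, ?_, ?_⟩
  · -- finrank 1
    have hker : LinearMap.range φ.toLinearMap ≤ LinearMap.ker (μfun eR') := by
      rintro v ⟨r, rfl⟩
      obtain ⟨G, rfl⟩ := hsT r
      rw [LinearMap.mem_ker, AlgHom.toLinearMap_apply, hE1, μ_phi]
    set μQ := Submodule.liftQ _ (μfun eR') hker with hμQ
    have hsurj : Function.Surjective μQ := by
      intro c
      refine ⟨Submodule.Quotient.mk (c • eR'.symm (Ideal.Quotient.mk _ (X 0))), ?_⟩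
      rw [hμQ, Submodule.liftQ_apply, map_smul, μ_x', smul_eq_mul, mul_one]
    have hinj : Function.Injective μQ := by
      rw [← LinearMap.ker_eq_bot, eq_bot_iff]
      rintro z hz
      obtain ⟨v, rfl⟩ := Submodule.Quotient.mk_surjective _ z
      rw [LinearMap.mem_ker, hμQ, Submodule.liftQ_apply] at hz
      obtain ⟨G, hG⟩ := hdecN v
      rw [hz, zero_smul, add_zero] at hG
      have : v ∈ LinearMap.range φ.toLinearMap := by
        refine ⟨eR.symm (Ideal.Quotient.mk _ G), ?_⟩
        rw [AlgHom.toLinearMap_apply, hE1, ← hG]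
      simpa [Submodule.Quotient.mk_eq_zero] using this
    have := LinearEquiv.finrank_eq (LinearEquiv.ofBijective μQ ⟨hinj, hsurj⟩)
    rw [this, Module.finrank_self]
  · -- span x'
    rw [Submodule.eq_top_iff']
    intro z
    obtain ⟨v, rfl⟩ := Submodule.Quotient.mk_surjective _ z
    obtain ⟨G, hG⟩ := hdecN v
    have h0 : (Submodule.Quotient.mk (eR'.symm (Ideal.Quotient.mk _ (Φm G)))
        : R' ⧸ LinearMap.range φ.toLinearMap) = 0 := by
      rw [Submodule.Quotient.mk_eq_zero]
      exact ⟨eR.symm (Ideal.Quotient.mk _ G), by rw [AlgHom.toLinearMap_apply, hE1]⟩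
    rw [hG, Submodule.Quotient.mk_add, Submodule.Quotient.mk_smul, h0, zero_add]
    exact Submodule.smul_mem _ _ (Submodule.subset_span rfl)
  · -- finrank 2
    have hker : LinearMap.range (ψ.comp φ).toLinearMap ≤ LinearMap.ker (Dmap eRt) := by
      rintro w ⟨r, rfl⟩
      obtain ⟨G, rfl⟩ := hsT r
      rw [LinearMap.mem_ker, AlgHom.toLinearMap_apply, AlgHom.comp_apply, hE3]
      have h1 : D1 eRt (eRt.symm (Ideal.Quotient.mk _ (χm G))) = 0 := by
        have := D1_chi_mul eRt G 1
        rwa [mul_one, D1_one, mul_zero] at this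
      have h2 : D2 eRt (eRt.symm (Ideal.Quotient.mk _ (χm G))) = 0 := by
        have := D2_chi_mul eRt G 1
        rwa [mul_one, D1_one, D2_one, mul_zero, mul_zero, add_zero] at this
      rw [Dmap_apply, h1, h2]
      rfl
    set DQ := Submodule.liftQ _ (Dmap eRt) hker with hDQ
    have hsurj : Function.Surjective DQ := by
      rintro ⟨a, b⟩
      refine ⟨Submodule.Quotient.mk
        (a • eRt.symm (Ideal.Quotient.mk _ (X 0))
          + b • eRt.symm (Ideal.Quotient.mk _ (X 0 * X 1))), ?_⟩
      rw [hDQ, Submodule.liftQ_apply, Dmap_apply, D1_add, D2_add,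
        D1_smul, D1_smul, D2_smul, D2_smul, D1_xt, D2_xt, D1_xyt, D2_xyt]
      simp
    have hinj : Function.Injective DQ := by
      rw [← LinearMap.ker_eq_bot, eq_bot_iff]
      rintro z hz
      obtain ⟨w, rfl⟩ := Submodule.Quotient.mk_surjective _ z
      rw [LinearMap.mem_ker, hDQ, Submodule.liftQ_apply, Dmap_apply, Prod.mk_eq_zero] at hz
      obtain ⟨G, hG⟩ := hdecNo w
      rw [hz.1, hz.2, zero_smul, zero_smul, add_zero, add_zero] at hG
      have : w ∈ LinearMap.range (ψ.comp φ).toLinearMap := by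
        refine ⟨eR.symm (Ideal.Quotient.mk _ G), ?_⟩
        rw [AlgHom.toLinearMap_apply, AlgHom.comp_apply, hE3, ← hG]
      rw [Submodule.mem_bot, Submodule.Quotient.mk_eq_zero]; exact this
    have := LinearEquiv.finrank_eq (LinearEquiv.ofBijective DQ ⟨hinj, hsurj⟩)
    rw [this]
    simp [Module.finrank_prod]
  · -- span xt, xyt
    rw [Submodule.eq_top_iff']
    intro z
    obtain ⟨w, rfl⟩ := Submodule.Quotient.mk_surjective _ z
    obtain ⟨G, hG⟩ := hdecNo w
    have h0 : (Submodule.Quotient.mk (eRt.symm (Ideal.Quotient.mk _ (χm G)))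
        : Rt ⧸ LinearMap.range (ψ.comp φ).toLinearMap) = 0 := by
      rw [Submodule.Quotient.mk_eq_zero]
      exact ⟨eR.symm (Ideal.Quotient.mk _ G), by
        rw [AlgHom.toLinearMap_apply, AlgHom.comp_apply, hE3]⟩
    rw [hG, Submodule.Quotient.mk_add, Submodule.Quotient.mk_add,
      Submodule.Quotient.mk_smul, Submodule.Quotient.mk_smul, h0, zero_add]
    refine Submodule.add_mem _ ?_ ?_
    · exact Submodule.smul_mem _ _ (Submodule.subset_span (Set.mem_insert _ _))
    · exact Submodule.smul_mem _ _
        (Submodule.subset_span (Set.mem_insert_of_mem _ rfl))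
  · -- classification
    letI : Module R Rt := ((ψ.comp φ) : R →+* Rt).toModule
    letI : Module R R' := (φ : R →+* R').toModule
    -- smul descriptions
    have hsm : ∀ (r : R) (w : Rt), r • w = ψ (φ r) * w := fun r w => rfl
    have hsm' : ∀ (r : R) (v : R'), r • v = φ r * v := fun r v => rfl
    have halg : ∀ c : ℂ, ψ (φ (algebraMap ℂ R c)) = algebraMap ℂ Rt c := by
      intro c; rw [φ.commutes, ψ.commutes]
    have hCsmulRt : ∀ (c : ℂ) (w : Rt), c • w = (algebraMap ℂ R c) • w := by
      intro c w
      rw [hsm, halg, ← Algebra.smul_def]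
    have hCsmulR' : ∀ (c : ℂ) (v : R'), c • v = (algebraMap ℂ R c) • v := by
      intro c v
      rw [hsm', φ.commutes, ← Algebra.smul_def]
    -- injectivity facts
    have hψ0 : ∀ v : R', ψ v = 0 → v = 0 := by
      intro v hv
      obtain ⟨H, rfl⟩ := hsN v
      rw [hE2] at hv
      have h0 : eRt.symm (Ideal.Quotient.mk _ (Φm H)) = eRt.symm (Ideal.Quotient.mk _ (0 : PP)) := by
        rw [map_zero, map_zero]; exact hv
      have h1 := hmkNo (Φm H) 0 |>.mp (eRt.symm.injective h0)
      rw [sub_zero] at h1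
      have h2 := ker_psi H h1
      have h3 : Ideal.Quotient.mk (Ideal.span {((X 0 - X 1) * (X 0 + X 1) : PP)}) H
          = Ideal.Quotient.mk _ (0 : PP) := by
        rw [hmkN, sub_zero]; exact h2
      rw [h3, map_zero, map_zero]
    have hχ0 : ∀ r : R, ψ (φ r) = 0 → r = 0 := by
      intro r hr
      obtain ⟨G, rfl⟩ := hsT r
      rw [hE3] at hr
      have h0 : eRt.symm (Ideal.Quotient.mk _ (χm G)) = eRt.symm (Ideal.Quotient.mk _ (0 : PP)) := by
        rw [map_zero, map_zero]; exact hr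
      have h1 := hmkNo (χm G) 0 |>.mp (eRt.symm.injective h0)
      rw [sub_zero] at h1
      have h2 := ker_chi G h1
      have h3 : Ideal.Quotient.mk (Ideal.span {((X 0 - X 1 ^ 2) * (X 0 + X 1 ^ 2) : PP)}) G
          = Ideal.Quotient.mk _ (0 : PP) := by
        rw [hmkT, sub_zero]; exact h2
      rw [h3, map_zero, map_zero]
    -- L-equation helpers
    have hLaE : ∀ (G : PP) (c : ℂ) (u v : Rt),
        La eRt (eRt.symm (Ideal.Quotient.mk _ (χm G)) * u + c • v)
          = ℓ0 (σ1 G) * La eRt u + c * La eRt v := by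
      intro G c u v
      rw [La_add, La_mul, (L_chi eRt G).1, La_smul]
    have hLbE : ∀ (G : PP) (c : ℂ) (u v : Rt),
        Lb eRt (eRt.symm (Ideal.Quotient.mk _ (χm G)) * u + c • v)
          = ℓ0 (σ1 G) * Lb eRt u + ℓ1 (σ1 G) * La eRt u + c * Lb eRt v := by
      intro G c u v
      rw [Lb_add, Lb_mul, (L_chi eRt G).1, (L_chi eRt G).2.1, Lb_smul]
    have hLcE : ∀ (G : PP) (c : ℂ) (u v : Rt),
        Lc eRt (eRt.symm (Ideal.Quotient.mk _ (χm G)) * u + c • v)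
          = ℓ0 (σ1 G) * Lc eRt u + c * Lc eRt v := by
      intro G c u v
      rw [Lc_add, Lc_mul, (L_chi eRt G).2.2.1, Lc_smul]
    have hLdE : ∀ (G : PP) (c : ℂ) (u v : Rt),
        Ld eRt (eRt.symm (Ideal.Quotient.mk _ (χm G)) * u + c • v)
          = ℓ0 (σ1 G) * Ld eRt u + ℓ1 (σ1 G) * Lc eRt u + c * Ld eRt v := by
      intro G c u v
      rw [Ld_add, Ld_mul, (L_chi eRt G).2.2.1, (L_chi eRt G).2.2.2, Ld_smul]
    -- the three non-isomorphism facts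
    have hRR' : (R ≃ₗ[R] R') → False := by
      intro E
      have hz : ∀ z : R', ∃ G : PP,
          z = eR'.symm (Ideal.Quotient.mk _ (Φm G)) * E 1 := by
        intro z
        obtain ⟨G, hG⟩ := hsT (E.symm z)
        refine ⟨G, ?_⟩
        have h1 : E ((E.symm z) • (1 : R)) = (E.symm z) • E 1 := map_smul E _ _
        rw [smul_eq_mul, mul_one] at h1
        calc z = E (E.symm z) := (E.apply_symm_apply z).symm
          _ = (E.symm z) • E 1 := h1
          _ = φ (E.symm z) * E 1 := hsm' _ _
          _ = eR'.symm (Ideal.Quotient.mk _ (Φm G)) * E 1 := by rw [hG, hE1]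
      obtain ⟨G1, t1⟩ := hz 1
      obtain ⟨G2, t2⟩ := hz (eR'.symm (Ideal.Quotient.mk _ (X 0)))
      have A1 : (1 : ℂ) = ℓ0 (σ1 G1) * Na eR' (E 1) := by
        have h := congrArg (Na eR') t1
        rwa [(N_one eR').1, Na_mul, (N_phi eR' G1).1] at h
      have C1 : (1 : ℂ) = ℓ0 (σ1 G1) * Nc eR' (E 1) := by
        have h := congrArg (Nc eR') t1
        rwa [(N_one eR').2.2.1, Nc_mul, (N_phi eR' G1).2.2.1] at h
      have A2 : (0 : ℂ) = ℓ0 (σ1 G2) * Na eR' (E 1) := by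
        have h := congrArg (Na eR') t2
        rwa [(N_x' eR').1, Na_mul, (N_phi eR' G2).1] at h
      have B2 : (1 : ℂ) = ℓ0 (σ1 G2) * Nb eR' (E 1) + ℓ1 (σ1 G2) * Na eR' (E 1) := by
        have h := congrArg (Nb eR') t2
        rwa [(N_x' eR').2.1, Nb_mul, (N_phi eR' G2).1, (N_phi eR' G2).2.1] at h
      have D2' : (-1 : ℂ) = ℓ0 (σ1 G2) * Nd eR' (E 1) + ℓ1 (σ1 G2) * Nc eR' (E 1) := by
        have h := congrArg (Nd eR') t2
        rwa [(N_x' eR').2.2.2, Nd_mul, (N_phi eR' G2).2.2.1, (N_phi eR' G2).2.2.2] at h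
      -- scalar contradiction
      set p0 := ℓ0 (σ1 G1); set q0 := ℓ0 (σ1 G2); set q1 := ℓ1 (σ1 G2)
      set F0 := Na eR' (E 1); set F1 := Nb eR' (E 1)
      set F2 := Nc eR' (E 1); set F3 := Nd eR' (E 1)
      have hp0 : p0 ≠ 0 := by
        intro h; rw [h, zero_mul] at A1; exact one_ne_zero A1
      have hF0 : F0 ≠ 0 := by
        intro h; rw [h, mul_zero] at A1; exact one_ne_zero A1
      have hF02 : F0 = F2 := mul_left_cancel₀ hp0 (A1.symm.trans C1)
      have hq0 : q0 = 0 := by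
        rcases mul_eq_zero.mp A2.symm with h | h
        · exact h
        · exact absurd h hF0
      rw [hq0, zero_mul, zero_add] at B2 D2'
      rw [← hF02] at D2'
      have : (1 : ℂ) = -1 := B2.trans D2'.symm
      norm_num at this
    have hRRt : (R ≃ₗ[R] Rt) → False := by
      intro E
      have hz : ∀ z : Rt, ∃ G : PP,
          z = eRt.symm (Ideal.Quotient.mk _ (χm G)) * E 1 := by
        intro z
        obtain ⟨G, hG⟩ := hsT (E.symm z)
        refine ⟨G, ?_⟩
        have h1 : E ((E.symm z) • (1 : R)) = (E.symm z) • E 1 := map_smul E _ _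
        rw [smul_eq_mul, mul_one] at h1
        calc z = E (E.symm z) := (E.apply_symm_apply z).symm
          _ = (E.symm z) • E 1 := h1
          _ = ψ (φ (E.symm z)) * E 1 := hsm _ _
          _ = eRt.symm (Ideal.Quotient.mk _ (χm G)) * E 1 := by rw [hG, hE3]
      obtain ⟨G1, t1⟩ := hz 1
      obtain ⟨G2, t2⟩ := hz (eRt.symm (Ideal.Quotient.mk _ (X 0)))
      have A1 : (1 : ℂ) = ℓ0 (σ1 G1) * La eRt (E 1) := by
        have h := congrArg (La eRt) t1
        rwa [(L_one eRt).1, La_mul, (L_chi eRt G1).1] at h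
      have C1 : (1 : ℂ) = ℓ0 (σ1 G1) * Lc eRt (E 1) := by
        have h := congrArg (Lc eRt) t1
        rwa [(L_one eRt).2.2.1, Lc_mul, (L_chi eRt G1).2.2.1] at h
      have A2 : (1 : ℂ) = ℓ0 (σ1 G2) * La eRt (E 1) := by
        have h := congrArg (La eRt) t2
        rwa [(L_xt eRt).1, La_mul, (L_chi eRt G2).1] at h
      have C2 : (-1 : ℂ) = ℓ0 (σ1 G2) * Lc eRt (E 1) := by
        have h := congrArg (Lc eRt) t2
        rwa [(L_xt eRt).2.2.1, Lc_mul, (L_chi eRt G2).2.2.1] at h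
      have hp0 : ℓ0 (σ1 G1) ≠ 0 := by
        intro h; rw [h, zero_mul] at A1; exact one_ne_zero A1
      have hF02 : La eRt (E 1) = Lc eRt (E 1) :=
        mul_left_cancel₀ hp0 (A1.symm.trans C1)
      rw [← hF02] at C2
      have : (1 : ℂ) = -1 := A2.trans C2.symm
      norm_num at this
    have hR'Rt : (R' ≃ₗ[R] Rt) → False := by
      intro E
      have hz : ∀ z : Rt, ∃ (G : PP) (c : ℂ),
          z = eRt.symm (Ideal.Quotient.mk _ (χm G)) * E 1
            + c • E (eR'.symm (Ideal.Quotient.mk _ (X 0))) := by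
        intro z
        obtain ⟨G, hG⟩ := hdecN (E.symm z)
        refine ⟨G, μfun eR' (E.symm z), ?_⟩
        have key1 : E (eR'.symm (Ideal.Quotient.mk _ (Φm G)))
            = eRt.symm (Ideal.Quotient.mk _ (χm G)) * E 1 := by
          have h0 : eR'.symm (Ideal.Quotient.mk _ (Φm G))
              = (eR.symm (Ideal.Quotient.mk _ G)) • (1 : R') := by
            rw [hsm', mul_one, hE1]
          rw [h0, map_smul, hsm, hE3]
        have key2 : ∀ c : ℂ, E (c • eR'.symm (Ideal.Quotient.mk _ (X 0)))
            = c • E (eR'.symm (Ideal.Quotient.mk _ (X 0))) := by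
          intro c
          rw [hCsmulR', map_smul, hsm, halg, ← Algebra.smul_def]
        calc z = E (E.symm z) := (E.apply_symm_apply z).symm
          _ = E (eR'.symm (Ideal.Quotient.mk _ (Φm G))
              + μfun eR' (E.symm z) • eR'.symm (Ideal.Quotient.mk _ (X 0))) := by rw [← hG]
          _ = _ := by rw [map_add, key1, key2]
      obtain ⟨G1, c1, t1⟩ := hz 1
      obtain ⟨G2, c2, t2⟩ := hz (eRt.symm (Ideal.Quotient.mk _ (X 0)))
      obtain ⟨G3, c3, t3⟩ := hz (eRt.symm (Ideal.Quotient.mk _ (X 1)))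
      obtain ⟨G4, c4, t4⟩ := hz (eRt.symm (Ideal.Quotient.mk _ (X 0 * X 1)))
      set w0 := E 1
      set w1 := E (eR'.symm (Ideal.Quotient.mk _ (X 0)))
      set a1 := ℓ0 (σ1 G1); set a2 := ℓ0 (σ1 G2); set a3 := ℓ0 (σ1 G3); set a4 := ℓ0 (σ1 G4)
      set b3 := ℓ1 (σ1 G3); set b4 := ℓ1 (σ1 G4)
      set F0 := La eRt w0; set F1 := Lb eRt w0; set F2 := Lc eRt w0; set F3 := Ld eRt w0
      set P0 := La eRt w1; set P1 := Lb eRt w1; set P2 := Lc eRt w1; set P3 := Ld eRt w1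
      have A1 : (1 : ℂ) = a1 * F0 + c1 * P0 := by
        have h := congrArg (La eRt) t1
        rwa [(L_one eRt).1, hLaE] at h
      have C1 : (1 : ℂ) = a1 * F2 + c1 * P2 := by
        have h := congrArg (Lc eRt) t1
        rwa [(L_one eRt).2.2.1, hLcE] at h
      have A2 : (1 : ℂ) = a2 * F0 + c2 * P0 := by
        have h := congrArg (La eRt) t2
        rwa [(L_xt eRt).1, hLaE] at h
      have C2 : (-1 : ℂ) = a2 * F2 + c2 * P2 := by
        have h := congrArg (Lc eRt) t2
        rwa [(L_xt eRt).2.2.1, hLcE] at h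
      have A3 : (0 : ℂ) = a3 * F0 + c3 * P0 := by
        have h := congrArg (La eRt) t3
        rwa [(L_yt eRt).1, hLaE] at h
      have B3 : (1 : ℂ) = a3 * F1 + b3 * F0 + c3 * P1 := by
        have h := congrArg (Lb eRt) t3
        rwa [(L_yt eRt).2.1, hLbE] at h
      have C3 : (0 : ℂ) = a3 * F2 + c3 * P2 := by
        have h := congrArg (Lc eRt) t3
        rwa [(L_yt eRt).2.2.1, hLcE] at h
      have D3 : (1 : ℂ) = a3 * F3 + b3 * F2 + c3 * P3 := by
        have h := congrArg (Ld eRt) t3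
        rwa [(L_yt eRt).2.2.2, hLdE] at h
      have A4 : (0 : ℂ) = a4 * F0 + c4 * P0 := by
        have h := congrArg (La eRt) t4
        rwa [(L_xyt eRt).1, hLaE] at h
      have B4 : (1 : ℂ) = a4 * F1 + b4 * F0 + c4 * P1 := by
        have h := congrArg (Lb eRt) t4
        rwa [(L_xyt eRt).2.1, hLbE] at h
      have C4 : (0 : ℂ) = a4 * F2 + c4 * P2 := by
        have h := congrArg (Lc eRt) t4
        rwa [(L_xyt eRt).2.2.1, hLcE] at h
      have D4 : (-1 : ℂ) = a4 * F3 + b4 * F2 + c4 * P3 := by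
        have h := congrArg (Ld eRt) t4
        rwa [(L_xyt eRt).2.2.2, hLdE] at h
      by_cases hc3 : c3 = 0
      · by_cases ha3 : a3 = 0
        · rw [hc3, ha3] at B3 D3
          have hB3 : (1 : ℂ) = b3 * F0 := by linear_combination B3
          have hD3 : (1 : ℂ) = b3 * F2 := by linear_combination D3
          have hb3 : b3 ≠ 0 := by
            intro h; rw [h, zero_mul] at hB3; exact one_ne_zero hB3
          have hF0 : F0 ≠ 0 := by
            intro h; rw [h, mul_zero] at hB3; exact one_ne_zero hB3
          have hF02 : F0 = F2 := mul_left_cancel₀ hb3 (hB3.symm.trans hD3)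
          by_cases hc4 : c4 = 0
          · rw [hc4] at A4 B4 D4
            have hA4 : a4 * F0 = 0 := by linear_combination -A4
            have ha4 : a4 = 0 := by
              rcases mul_eq_zero.mp hA4 with h | h
              · exact h
              · exact absurd h hF0
            rw [ha4] at B4 D4
            have hB4 : (1 : ℂ) = b4 * F0 := by linear_combination B4
            have hD4 : (-1 : ℂ) = b4 * F2 := by linear_combination D4
            rw [← hF02] at hD4
            have : (1 : ℂ) = -1 := hB4.trans hD4.symm
            norm_num at this
          · have hP02 : P0 = P2 := by
              have h := mul_left_cancel₀ hc4 (show c4 * P0 = c4 * P2 by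
                linear_combination -A4 + C4 - a4 * hF02)
              exact h
            have : (1 : ℂ) = -1 := by
              linear_combination A2 - C2 + a2 * hF02 + c2 * hP02
            norm_num at this
        · have hF0 : F0 = 0 := by
            rcases mul_eq_zero.mp (show a3 * F0 = 0 by
              rw [hc3] at A3; linear_combination -A3) with h | h
            · exact absurd h ha3
            · exact h
          have hF2 : F2 = 0 := by
            rcases mul_eq_zero.mp (show a3 * F2 = 0 by
              rw [hc3] at C3; linear_combination -C3) with h | h
            · exact absurd h ha3
            · exact h
          rw [hF0] at A1 A2
          rw [hF2] at C1 C2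
          have hA1 : (1 : ℂ) = c1 * P0 := by linear_combination A1
          have hC1 : (1 : ℂ) = c1 * P2 := by linear_combination C1
          have hc1 : c1 ≠ 0 := by
            intro h; rw [h, zero_mul] at hA1; exact one_ne_zero hA1
          have hP02 : P0 = P2 := mul_left_cancel₀ hc1 (hA1.symm.trans hC1)
          have : (1 : ℂ) = -1 := by
            linear_combination A2 - C2 + c2 * hP02
          norm_num at this
      · have hk1 : (c3 * a1 - c1 * a3) * F0 = c3 := by
          linear_combination -c3 * A1 + c1 * A3
        have hk2 : (c3 * a1 - c1 * a3) * F2 = c3 := by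
          linear_combination -c3 * C1 + c1 * C3
        have hk3 : (c3 * a2 - c2 * a3) * F0 = c3 := by
          linear_combination -c3 * A2 + c2 * A3
        have hk4 : (c3 * a2 - c2 * a3) * F2 = -c3 := by
          linear_combination -c3 * C2 + c2 * C3
        have hk1' : c3 * a1 - c1 * a3 ≠ 0 := by
          intro h; rw [h, zero_mul] at hk1; exact hc3 hk1.symm
        have hF02 : F0 = F2 := mul_left_cancel₀ hk1' (hk1.trans hk2.symm)
        have h2c : (2 : ℂ) * c3 = 0 := by
          linear_combination -hk3 + hk4 + (c3 * a2 - c2 * a3) * hF02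
        rcases mul_eq_zero.mp h2c with h | h
        · norm_num at h
        · exact hc3 h
    -- now the classification
    intro M hM1
    have h1M : ∀ r : R, ψ (φ r) ∈ M := by
      intro r
      have h := M.smul_mem r hM1
      rwa [hsm, mul_one] at h
    have hCs : ∀ (c : ℂ) (w : Rt), w ∈ M → c • w ∈ M := by
      intro c w hw
      rw [hCsmulRt]
      exact M.smul_mem _ hw
    have hchiM : ∀ G : PP, eRt.symm (Ideal.Quotient.mk _ (χm G)) ∈ M := by
      intro G
      have := h1M (eR.symm (Ideal.Quotient.mk _ G))
      rwa [hE3] at this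
    -- products
    have hyt_xt : eRt.symm (Ideal.Quotient.mk _ (X 1)) * eRt.symm (Ideal.Quotient.mk _ (X 0))
        = eRt.symm (Ideal.Quotient.mk _ (X 0 * X 1)) := by
      rw [← map_mul, ← map_mul]
      congr 1
      ring
    have hyt_xyt : eRt.symm (Ideal.Quotient.mk _ (X 1)) * eRt.symm (Ideal.Quotient.mk _ (X 0 * X 1))
        = eRt.symm (Ideal.Quotient.mk _ (χm (X 0))) := by
      rw [← map_mul, ← map_mul]
      congr 1
      rw [χm_X0]
      ring
    have hyt_chi : ψ (φ (eR.symm (Ideal.Quotient.mk _ (X 1)))) = eRt.symm (Ideal.Quotient.mk _ (X 1)) := by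
      rw [hE3]
      congr 2
      exact χm_X1
    -- membership propagation: if xt + b xyt ∈ M for some b, then xt, xyt ∈ M
    have hprop : ∀ b : ℂ, (eRt.symm (Ideal.Quotient.mk _ (X 0))
          + b • eRt.symm (Ideal.Quotient.mk _ (X 0 * X 1)) ∈ M) →
        eRt.symm (Ideal.Quotient.mk _ (X 0)) ∈ M ∧ eRt.symm (Ideal.Quotient.mk _ (X 0 * X 1)) ∈ M := by
      intro b hu
      have hmul := M.smul_mem (eR.symm (Ideal.Quotient.mk _ (X 1))) hu
      rw [hsm, hyt_chi, mul_add, hyt_xt, mul_smul_comm, hyt_xyt] at hmul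
      have hxyt : eRt.symm (Ideal.Quotient.mk _ (X 0 * X 1)) ∈ M := by
        have h2 := M.sub_mem hmul (hCs b _ (hchiM (X 0)))
        rwa [add_sub_cancel_right] at h2
      refine ⟨?_, hxyt⟩
      have h3 := M.sub_mem hu (hCs b _ hxyt)
      rwa [add_sub_cancel_right] at h3
    refine ⟨?_, ?_, ?_, ?_⟩
    · -- existence
      by_cases hex1 : ∃ m ∈ M, D1 eRt m ≠ 0
      · -- M = ⊤, M ≃ Rt
        obtain ⟨m, hmM, hD⟩ := hex1
        have hm' : (D1 eRt m)⁻¹ • m ∈ M := hCs _ _ hmM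
        obtain ⟨G, hG⟩ := hdecNo ((D1 eRt m)⁻¹ • m)
        rw [D1_smul, inv_mul_cancel₀ hD, D2_smul, one_smul] at hG
        have hu : eRt.symm (Ideal.Quotient.mk _ (X 0))
            + ((D1 eRt m)⁻¹ * D2 eRt m) • eRt.symm (Ideal.Quotient.mk _ (X 0 * X 1)) ∈ M := by
          have h4 := M.sub_mem hm' (hchiM G)
          rw [hG] at h4
          have : eRt.symm (Ideal.Quotient.mk _ (χm G))
              + eRt.symm (Ideal.Quotient.mk _ (X 0))
              + ((D1 eRt m)⁻¹ * D2 eRt m) • eRt.symm (Ideal.Quotient.mk _ (X 0 * X 1))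
              - eRt.symm (Ideal.Quotient.mk _ (χm G))
              = eRt.symm (Ideal.Quotient.mk _ (X 0))
              + ((D1 eRt m)⁻¹ * D2 eRt m) • eRt.symm (Ideal.Quotient.mk _ (X 0 * X 1)) := by
            rw [add_assoc, add_sub_cancel_left]
          rwa [this] at h4
        obtain ⟨hxtM, hxytM⟩ := hprop _ hu
        have hMtop : M = ⊤ := by
          rw [eq_top_iff]
          intro w _
          obtain ⟨G', hG'⟩ := hdecNo w
          rw [hG']
          exact M.add_mem (M.add_mem (hchiM G') (hCs _ _ hxtM)) (hCs _ _ hxytM)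
        exact Or.inr (Or.inr ⟨(LinearEquiv.ofEq M ⊤ hMtop).trans (Submodule.topEquiv)⟩)
      · push_neg at hex1
        by_cases hex2 : ∃ m ∈ M, D2 eRt m ≠ 0
        · -- M ≃ R'
          obtain ⟨m, hmM, hD⟩ := hex2
          have hm' : (D2 eRt m)⁻¹ • m ∈ M := hCs _ _ hmM
          obtain ⟨G, hG⟩ := hdecNo ((D2 eRt m)⁻¹ • m)
          rw [D1_smul, hex1 m hmM, mul_zero, zero_smul, add_zero,
            D2_smul, inv_mul_cancel₀ hD, one_smul] at hG
          have hxytM : eRt.symm (Ideal.Quotient.mk _ (X 0 * X 1)) ∈ M := by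
            have h4 := M.sub_mem hm' (hchiM G)
            rw [hG] at h4
            rwa [add_sub_cancel_left] at h4
          -- the R-linear map ψ
          let Ψl : R' →ₗ[R] Rt :=
            { toFun := fun v => ψ v
              map_add' := fun u v => map_add ψ u v
              map_smul' := fun r v => by
                simp only [RingHom.id_apply]
                rw [hsm', map_mul, hsm] }
          have hΨinj : Function.Injective Ψl := by
            intro u v huv
            have h5 : ψ (u - v) = 0 := by
              rw [map_sub]
              simpa [Ψl, sub_eq_zero] using huv
            have := hψ0 _ h5
            rwa [sub_eq_zero] at this
          have hrange : LinearMap.range Ψl = M := by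
            apply le_antisymm
            · rintro w ⟨v, rfl⟩
              obtain ⟨G', hG'⟩ := hdecN v
              have hval : Ψl v = ψ v := rfl
              rw [hval, hG', map_add, map_smul]
              rw [← hE1, hψx]
              have hterm1 : ψ (φ (eR.symm (Ideal.Quotient.mk _ G'))) ∈ M := h1M _
              exact M.add_mem hterm1 (hCs _ _ hxytM)
            · intro w hw
              obtain ⟨G', hG'⟩ := hdecNo w
              rw [hex1 w hw, zero_smul, add_zero] at hG'
              refine ⟨φ (eR.symm (Ideal.Quotient.mk _ G'))
                + D2 eRt w • eR'.symm (Ideal.Quotient.mk _ (X 0)), ?_⟩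
              have hval : ∀ v : R', Ψl v = ψ v := fun v => rfl
              rw [hval, map_add, map_smul, hψx, hE3, ← hG']
            -- done
          exact Or.inr (Or.inl
            ⟨((LinearEquiv.ofEq M _ hrange.symm).trans
              (LinearEquiv.ofInjective Ψl hΨinj).symm)⟩)
        · -- M ≃ R
          push_neg at hex2
          set χl : R →ₗ[R] Rt := LinearMap.toSpanSingleton R Rt 1 with hχl
          have hχinj : Function.Injective χl := by
            intro u v huv
            have h5 : ψ (φ (u - v)) = 0 := by
              have hval : ∀ r : R, χl r = ψ (φ r) := by
                intro r
                rw [hχl, LinearMap.toSpanSingleton_apply, hsm, mul_one]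
              rw [map_sub, map_sub]
              have : χl u = χl v := huv
              rw [hval, hval] at this
              rw [this, sub_self]
            have := hχ0 _ h5
            rwa [sub_eq_zero] at this
          have hrange : LinearMap.range χl = M := by
            apply le_antisymm
            · rintro w ⟨r, rfl⟩
              have hval : χl r = ψ (φ r) := by
                rw [hχl, LinearMap.toSpanSingleton_apply, hsm, mul_one]
              rw [hval]
              exact h1M r
            · intro w hw
              obtain ⟨G', hG'⟩ := hdecNo w
              rw [hex1 w hw, zero_smul, add_zero, hex2 w hw, zero_smul, add_zero] at hG'
              refine ⟨eR.symm (Ideal.Quotient.mk _ G'), ?_⟩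
              have hval : χl (eR.symm (Ideal.Quotient.mk _ G'))
                  = ψ (φ (eR.symm (Ideal.Quotient.mk _ G'))) := by
                rw [hχl, LinearMap.toSpanSingleton_apply, hsm, mul_one]
              rw [hval, hE3, ← hG']
          exact Or.inl
            ⟨((LinearEquiv.ofEq M _ hrange.symm).trans
              (LinearEquiv.ofInjective χl hχinj).symm)⟩
    · rintro ⟨⟨E1⟩, ⟨E2⟩⟩
      exact hRR' (E1.symm.trans E2)
    · rintro ⟨⟨E1⟩, ⟨E2⟩⟩
      exact hRRt (E1.symm.trans E2)
    · rintro ⟨⟨E1⟩, ⟨E2⟩⟩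
      exact hR'Rt (E1.symm.trans E2)
end
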